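/- arXiv:1405.3124 — 9 statements merged into one kernel-verified Lean document; each statement's English description precedes it below -/
import Mathlib

section
/- Suppose b ≠ 0, b'' ≠ 0, a'·b = a·b', a''·b = a·b'', b''·c = b·c'', and the sequences (x_n), (y_n) of real numbers satisfy x_{n+1} = a·x_n + b·y_n + c and y_{n+1} = (a'·x_n + b'·y_n + c')/(a''·x_n + b''·y_n + c'') for all n ≥ 0, with a''·x_n + b''·y_n + c'' ≠ 0 for all n. Then for all n ≥ 0 one has x_{n+1} ≠ 0 and x_{n+2} = a·x_{n+1} + q + s/x_{n+1}, where q = c + b·b'/b'' and s = b·D'_{cb}/b''. -/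
/-!
Multiplying through by `b`, the degeneracy conditions make both the numerator and the
denominator of the `y`-map affine functions of `x_{n+1} = a·x_n + b·y_n + c` alone:
`b·(a''·x_n + b''·y_n + c'') = b''·x_{n+1}` and `b·(a'·x_n + b'·y_n + c') = b'·x_{n+1} + D'_{cb}`.
Hence `x_{n+1} ≠ 0` and `b·y_{n+1} = (b·b' x_{n+1} + b·D'_{cb}) / (b''·x_{n+1})`, which substituted
into `x_{n+2} = a·x_{n+1} + b·y_{n+1} + c` gives the folded recursion.
-/

section FoldedStep

variable {a b c a' b' c' a'' b'' c'' : ℝ} (x y : ℝ)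

theorem mul_denom_eq_mul_next (h2 : a'' * b = a * b'') (h3 : b'' * c = b * c'') :
    b * (a'' * x + b'' * y + c'') = b'' * (a * x + b * y + c) := by
  linear_combination x * h2 - h3

theorem mul_numer_eq_next (h1 : a' * b = a * b') :
    b * (a' * x + b' * y + c') = b' * (a * x + b * y + c) + (b * c' - b' * c) := by
  linear_combination x * h1

theorem next_ne_zero (hb : b ≠ 0) (h2 : a'' * b = a * b'') (h3 : b'' * c = b * c'')
    (hd : a'' * x + b'' * y + c'' ≠ 0) : a * x + b * y + c ≠ 0 := by
  intro h
  have := mul_denom_eq_mul_next x y h2 h3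
  rw [h, mul_zero] at this
  exact mul_ne_zero hb hd this

theorem mul_ratio_eq_of_next (hb : b ≠ 0) (hb'' : b'' ≠ 0)
    (h1 : a' * b = a * b') (h2 : a'' * b = a * b'') (h3 : b'' * c = b * c'')
    (hd : a'' * x + b'' * y + c'' ≠ 0) :
    b * ((a' * x + b' * y + c') / (a'' * x + b'' * y + c'')) =
      b * b' / b'' + (b * (b * c' - b' * c) / b'') / (a * x + b * y + c) := by
  have hX := next_ne_zero x y hb h2 h3 hd
  have hdenom : a'' * x + b'' * y + c'' = b'' * (a * x + b * y + c) / b := by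
    rw [eq_div_iff hb, mul_comm, mul_denom_eq_mul_next x y h2 h3]
  rw [mul_div_assoc', mul_numer_eq_next x y h1, hdenom]
  field_simp
  ring

end FoldedStep

/-- Under the degeneracy conditions `a'·b = a·b'`, `a''·b = a·b''`, `b''·c = b·c''`,
the folding of the planar rational system reduces to the first-order recursion
`x_{n+2} = a·x_{n+1} + q + s/x_{n+1}` with `q = c + b·b'/b''` and
`s = b·D'_{cb}/b'' = b·(b·c' − b'·c)/b''`. -/
theorem stmt_1 (a b c a' b' c' a'' b'' c'' : ℝ) (hb : b ≠ 0) (hb'' : b'' ≠ 0)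
    (h1 : a' * b = a * b') (h2 : a'' * b = a * b'') (h3 : b'' * c = b * c'')
    (x y : ℕ → ℝ)
    (hx : ∀ n : ℕ, x (n + 1) = a * x n + b * y n + c)
    (hy : ∀ n : ℕ, y (n + 1) =
      (a' * x n + b' * y n + c') / (a'' * x n + b'' * y n + c''))
    (hd : ∀ n : ℕ, a'' * x n + b'' * y n + c'' ≠ 0) :
    ∀ n : ℕ,
      x (n + 1) ≠ 0 ∧
      x (n + 2) =
        a * x (n + 1) + (c + b * b' / b'') +
          (b * (b * c' - b' * c) / b'') / x (n + 1) := by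
  intro n
  refine ⟨hx n ▸ next_ne_zero _ _ hb h2 h3 (hd n), ?_⟩
  rw [hx (n + 1), hy n, mul_ratio_eq_of_next _ _ hb hb'' h1 h2 h3 (hd n), ← hx n]
  ring
end

section
/- Let q be a real number with −2 < q < 0, and let (r_n) satisfy r_{n+1} = r_n + q + 1/r_n for all n ≥ 0 with r_0 > 0. Then r_n > 0 for all n ≥ 0, and the sequence (r_n) is bounded: there exists M > 0 such that r_n ≤ M for all n. -/
/-! By AM–GM, `x + 1/x ≥ 2` for `x > 0`, so one step of `f_q(x) = x + q + 1/x` lands in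
`[2 + q, ∞)`, a ray of positive numbers since `q > -2`; hence the orbit stays positive. On that
ray `f_q` decreases `x` as soon as `x > -1/q` (then `1/x < -q`), while for `x ≤ -1/q` it gives
at most `-1/q + q + 1/(2 + q)`. So each step satisfies `r_{n+1} ≤ max r_n C` for this constant
`C`, and the orbit is bounded by `max r_0 (max r_1 C)`. -/

lemma two_le_add_one_div {x : ℝ} (hx : 0 < x) : 2 ≤ x + 1 / x := by
  have h : x + 1 / x - 2 = (x - 1) ^ 2 / x := by field_simp; ring
  linarith [show 0 ≤ (x - 1) ^ 2 / x by positivity]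

lemma two_add_le_add_add_one_div {q x : ℝ} (hx : 0 < x) : 2 + q ≤ x + q + 1 / x := by
  linarith [two_le_add_one_div hx]

lemma add_add_one_div_lt_self {q x : ℝ} (hq : q < 0) (hx : -1 / q < x) :
    x + q + 1 / x < x := by
  have hq' : 0 < -1 / q := div_pos_of_neg_of_neg (by norm_num) hq
  have h : 1 / x < 1 / (-1 / q) := one_div_lt_one_div_of_lt hq' hx
  rw [one_div_div, div_neg, div_one] at h
  linarith

lemma add_add_one_div_le_max {q x : ℝ} (hq : q < 0) (hq2 : 0 < 2 + q) (hx : 2 + q ≤ x) :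
    x + q + 1 / x ≤ max x (-1 / q + q + 1 / (2 + q)) := by
  rcases le_or_gt x (-1 / q) with hsmall | hlarge
  · have : 1 / x ≤ 1 / (2 + q) := one_div_le_one_div_of_le hq2 hx
    exact le_max_of_le_right (by linarith)
  · exact le_max_of_le_left (add_add_one_div_lt_self hq hlarge).le

lemma le_max_zero_of_le_max_succ {s : ℕ → ℝ} {C : ℝ} (h : ∀ n, s (n + 1) ≤ max (s n) C) :
    ∀ n, s n ≤ max (s 0) C
  | 0 => le_max_left _ _
  | n + 1 => (h n).trans (max_le (le_max_zero_of_le_max_succ h n) (le_max_right _ _))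

/-- For `−2 < q < 0`, every solution of `r_{n+1} = r_n + q + 1/r_n` with
`r_0 > 0` is positive and bounded. -/
theorem stmt_3 (q : ℝ) (hq1 : -2 < q) (hq2 : q < 0)
    (r : ℕ → ℝ) (hr : ∀ n : ℕ, r (n + 1) = r n + q + 1 / r n)
    (h0 : r 0 > 0) :
    (∀ n : ℕ, r n > 0) ∧ ∃ M : ℝ, M > 0 ∧ ∀ n : ℕ, r n ≤ M := by
  have hq : 0 < 2 + q := by linarith
  have hpos : ∀ n, 0 < r n := by
    intro n
    induction n with
    | zero => exact h0
    | succ k ih => exact hq.trans_le (hr k ▸ two_add_le_add_add_one_div ih)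
  have hge : ∀ n, 2 + q ≤ r (n + 1) := fun n => hr n ▸ two_add_le_add_add_one_div (hpos n)
  set C := -1 / q + q + 1 / (2 + q)
  have hstep : ∀ n, r (n + 1 + 1) ≤ max (r (n + 1)) C := fun n =>
    hr (n + 1) ▸ add_add_one_div_le_max hq2 hq (hge n)
  refine ⟨hpos, max (r 0) (max (r 1) C), lt_max_of_lt_left h0, ?_⟩
  rintro (_ | n)
  · exact le_max_left _ _
  · exact le_max_of_le_right (le_max_zero_of_le_max_succ (s := fun n => r (n + 1)) hstep n)
end

section
/- Let q be a real number with −√(5/2) < q < −√2, and set t₁ = (−q − √(q² − 2))/2 and t₂ = (−q + √(q² − 2))/2. Then 0 < t₁ < t₂, f_q(t₁) = t₂ and f_q(t₂) = t₁ (so {t₁, t₂} is a cycle of minimal period 2 of the recursion r_{n+1} = r_n + q + 1/r_n), and this 2-cycle is asymptotically stable: |(1 − 1/t₁²)·(1 − 1/t₂²)| < 1, i.e. the derivative of f_q ∘ f_q at t₁ has absolute value strictly less than 1. -/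
/-! `t₁` and `t₂` are the roots of `t² + q t + 1/2`, so `t₁ + t₂ = -q` and `t₁ t₂ = 1/2`.
Then `1/t₁ = 2 t₂`, whence `f_q(t₁) = t₁ + q + 2 t₂ = t₂`, and symmetrically. The multiplier of the
cycle is `(1 - 4 t₂²)(1 - 4 t₁²) = 5 - 4 (t₁² + t₂²) = 9 - 4 q²`, which lies in `(-1, 1)` exactly
when `2 < q² < 5/2`. -/

section HalfProductPair

variable {a b q : ℝ}

theorem add_add_one_div_eq_of_mul_eq_half (hab : a * b = 1 / 2) (hsum : a + b = -q) :
    a + q + 1 / a = b := by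
  have ha : a ≠ 0 := left_ne_zero_of_mul (by rw [hab]; norm_num)
  have hinv : 1 / a = 2 * b := by
    rw [div_eq_iff ha]
    linear_combination -2 * hab
  linarith

theorem one_sub_one_div_sq_mul_eq_of_mul_eq_half (hab : a * b = 1 / 2) (hsum : a + b = -q) :
    (1 - 1 / a ^ 2) * (1 - 1 / b ^ 2) = 9 - 4 * q ^ 2 := by
  have ha : a ≠ 0 := left_ne_zero_of_mul (by rw [hab]; norm_num)
  have hb : b ≠ 0 := right_ne_zero_of_mul (by rw [hab]; norm_num)
  field_simp
  linear_combination (4 * q ^ 2 - 8) * (a * b + 1 / 2) * hab - ((a + b - q) * hsum - 2 * hab)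

end HalfProductPair

theorem two_lt_sq_and_sq_lt_of_lt_neg_sqrt {q : ℝ} (hq1 : -Real.sqrt (5 / 2) < q)
    (hq2 : q < -Real.sqrt 2) : 2 < q ^ 2 ∧ q ^ 2 < 5 / 2 := by
  have hpos : 0 < -q := lt_of_le_of_lt (Real.sqrt_nonneg 2) (by linarith)
  constructor
  · simpa [neg_sq] using (Real.sqrt_lt' hpos).mp (by linarith : Real.sqrt 2 < -q)
  · simpa [neg_sq] using (Real.lt_sqrt hpos.le).mp (by linarith : -q < Real.sqrt (5 / 2))

/-- For `−√(5/2) < q < −√2`, the points `t₁ = (−q − √(q² − 2))/2` and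
`t₂ = (−q + √(q² − 2))/2` form an asymptotically stable 2-cycle of
`f_q(r) = r + q + 1/r`: `0 < t₁ < t₂`, `f_q(t₁) = t₂`, `f_q(t₂) = t₁`, and the
derivative of `f_q ∘ f_q` at `t₁`, namely `(1 − 1/t₁²)·(1 − 1/t₂²)`, has
absolute value strictly less than 1. -/
theorem stmt_4 (q : ℝ) (hq1 : -Real.sqrt (5 / 2) < q) (hq2 : q < -Real.sqrt 2)
    (t₁ t₂ : ℝ)
    (ht₁ : t₁ = (-q - Real.sqrt (q ^ 2 - 2)) / 2)
    (ht₂ : t₂ = (-q + Real.sqrt (q ^ 2 - 2)) / 2) :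
    0 < t₁ ∧ t₁ < t₂ ∧
    t₁ + q + 1 / t₁ = t₂ ∧ t₂ + q + 1 / t₂ = t₁ ∧
    |(1 - 1 / t₁ ^ 2) * (1 - 1 / t₂ ^ 2)| < 1 := by
  obtain ⟨hq_lower, hq_upper⟩ := two_lt_sq_and_sq_lt_of_lt_neg_sqrt hq1 hq2
  set s := Real.sqrt (q ^ 2 - 2)
  have hs_sq : s ^ 2 = q ^ 2 - 2 := Real.sq_sqrt (by linarith)
  have hs_pos : 0 < s := Real.sqrt_pos.mpr (by linarith)
  have hq_neg : q < 0 := by linarith [Real.sqrt_nonneg 2]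
  have hs_lt : s < -q := by nlinarith
  have hprod : t₁ * t₂ = 1 / 2 := by rw [ht₁, ht₂]; linear_combination -hs_sq / 4
  have hsum : t₁ + t₂ = -q := by rw [ht₁, ht₂]; ring
  refine ⟨by rw [ht₁]; linarith, by rw [ht₁, ht₂]; linarith,
    add_add_one_div_eq_of_mul_eq_half hprod hsum,
    add_add_one_div_eq_of_mul_eq_half (by rwa [mul_comm]) (by rwa [add_comm]), ?_⟩
  rw [one_sub_one_div_sq_mul_eq_of_mul_eq_half hprod hsum, abs_lt]
  constructor <;> linarith
end

section
/- Let q = −√3 and set r₀ = (2/√3)·(1 + cos(π/9)), r₁ = r₀ − √3 + 1/r₀, r₂ = r₁ − √3 + 1/r₁. Then r₀, r₁, r₂ are positive, f_q(r₂) = r₀, and r₀, r₁, r₂ are pairwise distinct; that is, {r₀, r₁, r₂} is a cycle of minimal period 3 of the recursion r_{n+1} = r_n − √3 + 1/r_n. -/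
/-!
Writing `c = cos (π / 9)`, the identity `cos 3θ = 4 cos³ θ - 3 cos θ` gives `8 c³ - 6 c = 1`,
and modulo this cubic the three iterates of `r₀ = 2 (1 + c) / √3` become the rational
expressions `(4c² + 2c + 1) / (2√3 (1 + c))`, `√3 / (4c² + 2c + 1)` and `r₀` again.
(They are `2 (1 + c') / √3` for the three roots `c'` of the cubic.) A point of a 3-cycle
that is not fixed has minimal period 3, and the only fixed point of `r ↦ r - √3 + 1/r` is `1/√3`.
-/

open Real

theorem Function.pairwise_ne_of_three_cycle {α : Type*} {f : α → α} {x y z : α}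
    (hxy : f x = y) (hyz : f y = z) (hzx : f z = x) (hx : f x ≠ x) :
    x ≠ y ∧ x ≠ z ∧ y ≠ z := by
  refine ⟨fun h => hx (hxy.trans h.symm), fun h => hx (h ▸ hzx), fun h => ?_⟩
  subst h
  exact hx (by rw [← hzx, hyz, hyz])

theorem cos_pi_div_nine_cubic : 8 * cos (π / 9) ^ 3 - 6 * cos (π / 9) = 1 := by
  have h := cos_three_mul (π / 9)
  rw [show 3 * (π / 9) = π / 3 by ring, cos_pi_div_three] at h
  linarith

theorem cos_pi_div_nine_pos : 0 < cos (π / 9) :=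
  cos_pos_of_mem_Ioo ⟨by linarith [pi_pos], by linarith [pi_pos]⟩

theorem four_mul_sq_add_two_mul_add_one_pos (c : ℝ) : 0 < 4 * c ^ 2 + 2 * c + 1 := by
  nlinarith [sq_nonneg (2 * c + 1 / 2)]

section Cycle

variable {s c : ℝ}

theorem cycle_step₀ (hs : s ^ 2 = 3) (hc : 1 + c ≠ 0) :
    2 * (1 + c) / s - s + 1 / (2 * (1 + c) / s) =
      (4 * c ^ 2 + 2 * c + 1) / (2 * s * (1 + c)) := by
  have hs0 : s ≠ 0 := by rintro rfl; norm_num at hs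
  field_simp
  linear_combination (-(2 * c + 1)) * hs

theorem cycle_step₁ (hs : s ^ 2 = 3) (hcub : 8 * c ^ 3 - 6 * c = 1) (hc : 1 + c ≠ 0) :
    (4 * c ^ 2 + 2 * c + 1) / (2 * s * (1 + c)) - s +
        1 / ((4 * c ^ 2 + 2 * c + 1) / (2 * s * (1 + c))) =
      s / (4 * c ^ 2 + 2 * c + 1) := by
  have hs0 : s ≠ 0 := by rintro rfl; norm_num at hs
  have hq := (four_mul_sq_add_two_mul_add_one_pos c).ne'
  -- otherwise `field_simp` rewrites the quadratic into a shape `hq` no longer matches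
  generalize hQ : 4 * c ^ 2 + 2 * c + 1 = Q at hq ⊢
  field_simp
  subst hQ
  linear_combination (-8 * c ^ 2 - 8 * c ^ 3) * hs + (2 * c - 1) * hcub

theorem cycle_step₂ (hs : s ^ 2 = 3) (hcub : 8 * c ^ 3 - 6 * c = 1) :
    s / (4 * c ^ 2 + 2 * c + 1) - s + 1 / (s / (4 * c ^ 2 + 2 * c + 1)) = 2 * (1 + c) / s := by
  have hs0 : s ≠ 0 := by rintro rfl; norm_num at hs
  have hq := (four_mul_sq_add_two_mul_add_one_pos c).ne'
  generalize hQ : 4 * c ^ 2 + 2 * c + 1 = Q at hq ⊢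
  field_simp
  subst hQ
  linear_combination (-2 * c - 4 * c ^ 2) * hs + (2 * c + 1) * hcub

end Cycle

/-- For `q = −√3`, the points `r₀ = (2/√3)(1 + cos(π/9))`, `r₁ = f_q(r₀)`,
`r₂ = f_q(r₁)` are positive, satisfy `f_q(r₂) = r₀`, and are pairwise distinct:
a cycle of minimal period 3 of `r_{n+1} = r_n − √3 + 1/r_n`. -/
theorem stmt_5 (r₀ r₁ r₂ : ℝ)
    (h₀ : r₀ = 2 / Real.sqrt 3 * (1 + Real.cos (Real.pi / 9)))
    (h₁ : r₁ = r₀ - Real.sqrt 3 + 1 / r₀)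
    (h₂ : r₂ = r₁ - Real.sqrt 3 + 1 / r₁) :
    0 < r₀ ∧ 0 < r₁ ∧ 0 < r₂ ∧
    r₂ - Real.sqrt 3 + 1 / r₂ = r₀ ∧
    r₀ ≠ r₁ ∧ r₀ ≠ r₂ ∧ r₁ ≠ r₂ := by
  set s := √3
  set c := cos (π / 9)
  have hs : s ^ 2 = 3 := sq_sqrt (by norm_num)
  have hs0 : 0 < s := sqrt_pos.mpr (by norm_num)
  have hc0 : 0 < c := cos_pi_div_nine_pos
  have hc : 1 + c ≠ 0 := by positivity
  have e₀ : r₀ = 2 * (1 + c) / s := by rw [h₀]; ring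
  have e₁ : r₁ = (4 * c ^ 2 + 2 * c + 1) / (2 * s * (1 + c)) := by
    rw [h₁, e₀, cycle_step₀ hs hc]
  have e₂ : r₂ = s / (4 * c ^ 2 + 2 * c + 1) := by
    rw [h₂, e₁, cycle_step₁ hs cos_pi_div_nine_cubic hc]
  have h₃ : r₂ - s + 1 / r₂ = r₀ := by rw [e₂, cycle_step₂ hs cos_pi_div_nine_cubic, e₀]
  have not_fixed : r₀ - s + 1 / r₀ ≠ r₀ := by
    rw [e₀, one_div_div]
    intro h
    field_simp at h
    nlinarith
  exact ⟨by rw [e₀]; positivity, by rw [e₁]; positivity, by rw [e₂]; positivity, h₃,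
    Function.pairwise_ne_of_three_cycle (f := fun r => r - s + 1 / r) h₁.symm h₂.symm h₃ not_fixed⟩
end

section
/- Let q be a real number with −2 < q ≤ −√3. Then the recursion r_{n+1} = r_n + q + 1/r_n has cycles of all possible periods: for every positive integer p there exists r₀ > 0 such that the orbit of r₀ under f_q stays in (0, ∞) and is periodic with minimal period exactly p. -/
/-!
A continuous interval map with a 3-cycle `a ↦ c ↦ b ↦ a`, `a < b < c`, has points of every
minimal period `p`: with `U = [a, b]` and `V = [b, c]` one has `f U ⊇ U ∪ V` and `f V ⊇ U`, so
nested closed intervals realise the itinerary `V, U, …, U, V` of length `p + 1`, and `f^[p]` has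
a fixed point there. Its minimal period is `p`, since an earlier return would put the point in
`U ∩ V = {b}`, whose orbit `b, a, c` leaves `U` too soon.

For `f_q t = t + q + 1 / t` and `d = √(q² - 3)`, the map `f_q` permutes the roots of the cubic
`x³ + (2q - d) x² + (q² - q d) x + (q - d) / 3`. For `-2 < q ≤ -√3` these roots are positive and
distinct, `f_q` cycles them as above, and `f_q` keeps `(0, ∞)` invariant.
-/

open Set Function

section IntervalDynamics

variable {f : ℝ → ℝ} {a b : ℝ}

theorem ContinuousOn.exists_Icc_subset_image_eq_Icc_of_le (hf : ContinuousOn f (Icc a b))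
    (hab : a ≤ b) (hfab : f a ≤ f b) :
    ∃ a' b', Icc a' b' ⊆ Icc a b ∧ f '' Icc a' b' = Icc (f a) (f b) := by
  have hpre : ∀ {c d y : ℝ}, ContinuousOn f (Icc c d) →
      IsCompact (Icc c d ∩ f ⁻¹' {y}) := fun hf => isCompact_Icc.of_isClosed_subset
      (hf.preimage_isClosed_of_isClosed isClosed_Icc isClosed_singleton) inter_subset_left
  obtain ⟨b', ⟨⟨hab', hb'b⟩, hfb'⟩, hb'_least⟩ :=
    (hpre hf).exists_isLeast ⟨b, right_mem_Icc.2 hab, rfl⟩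
  have hf' : ContinuousOn f (Icc a b') := hf.mono (Icc_subset_Icc_right hb'b)
  obtain ⟨a', ⟨⟨haa', ha'b'⟩, hfa'⟩, ha'_greatest⟩ :=
    (hpre hf').exists_isGreatest ⟨a, left_mem_Icc.2 hab', rfl⟩
  simp only [mem_preimage, mem_singleton_iff] at hfa' hfb'
  refine ⟨a', b', Icc_subset_Icc haa' hb'b, Subset.antisymm ?_ ?_⟩
  · rintro _ ⟨x, ⟨hxa', hxb'⟩, rfl⟩
    -- a value of `f` outside `[f a, f b]` on `[a', b']` would, by the intermediate value
    -- theorem, produce a preimage of `f a` right of `a'` or of `f b` left of `b'`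
    by_contra hx
    rcases not_and_or.1 hx with hlt | hlt <;> push Not at hlt
    · obtain ⟨y, ⟨hxy, hyb'⟩, hfy⟩ :=
        intermediate_value_Icc hxb' (hf'.mono (Icc_subset_Icc_left (haa'.trans hxa')))
          ⟨hlt.le, hfb' ▸ hfab⟩
      have := ha'_greatest ⟨⟨haa'.trans (hxa'.trans hxy), hyb'⟩, hfy⟩
      exact hlt.ne (by rw [le_antisymm (hxy.trans this) hxa', hfa'])
    · obtain ⟨y, ⟨hay, hyx⟩, hfy⟩ :=
        intermediate_value_Icc (haa'.trans hxa') (hf.mono (Icc_subset_Icc_right (hxb'.trans hb'b)))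
          ⟨hfab, hlt.le⟩
      have := hb'_least ⟨⟨hay, hyx.trans (hxb'.trans hb'b)⟩, hfy⟩
      exact hlt.ne' (by rw [le_antisymm hxb' (this.trans hyx), hfb'])
  · rw [← hfa', ← hfb']
    exact intermediate_value_Icc ha'b' (hf'.mono (Icc_subset_Icc_left haa'))

theorem ContinuousOn.exists_Icc_subset_image_eq_Icc_of_ge (hf : ContinuousOn f (Icc a b))
    (hab : a ≤ b) (hfab : f b ≤ f a) :
    ∃ a' b', Icc a' b' ⊆ Icc a b ∧ f '' Icc a' b' = Icc (f b) (f a) := by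
  obtain ⟨a', b', hsub, himage⟩ :=
    hf.neg.exists_Icc_subset_image_eq_Icc_of_le hab (neg_le_neg hfab)
  refine ⟨a', b', hsub, ?_⟩
  change Neg.neg ∘ f '' _ = _ at himage
  rw [image_comp, image_neg_eq_neg] at himage
  rw [← neg_neg (f '' _), himage, neg_Icc]
  simp only [Pi.neg_apply, neg_neg]

theorem ContinuousOn.exists_Icc_subset_image_eq_Icc {s t : ℝ} (hf : ContinuousOn f (Icc a b))
    (hsurj : SurjOn f (Icc a b) (Icc s t)) :
    ∃ a' b', Icc a' b' ⊆ Icc a b ∧ f '' Icc a' b' = Icc s t := by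
  rcases lt_or_ge t s with hts | hst
  · exact ⟨1, 0, by simp, by simp [Icc_eq_empty_of_lt hts]⟩
  obtain ⟨x, hx, rfl⟩ := hsurj (left_mem_Icc.2 hst)
  obtain ⟨y, hy, rfl⟩ := hsurj (right_mem_Icc.2 hst)
  rcases le_total x y with hxy | hyx
  · obtain ⟨a', b', hsub, himage⟩ :=
      (hf.mono (Icc_subset_Icc hx.1 hy.2)).exists_Icc_subset_image_eq_Icc_of_le hxy hst
    exact ⟨a', b', hsub.trans (Icc_subset_Icc hx.1 hy.2), himage⟩
  · obtain ⟨a', b', hsub, himage⟩ :=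
      (hf.mono (Icc_subset_Icc hy.1 hx.2)).exists_Icc_subset_image_eq_Icc_of_ge hyx hst
    exact ⟨a', b', hsub.trans (Icc_subset_Icc hy.1 hx.2), himage⟩

theorem exists_Icc_subset_iterate_image_eq_Icc (l r : ℕ → ℝ) {n : ℕ}
    (hf : ∀ k < n, ContinuousOn f (Icc (l k) (r k)))
    (hsurj : ∀ k < n, SurjOn f (Icc (l k) (r k)) (Icc (l (k + 1)) (r (k + 1)))) :
    ∃ u v, Icc u v ⊆ Icc (l 0) (r 0) ∧ ContinuousOn f^[n] (Icc u v) ∧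
      (∀ k ≤ n, MapsTo f^[k] (Icc u v) (Icc (l k) (r k))) ∧
      f^[n] '' Icc u v = Icc (l n) (r n) := by
  induction n with
  | zero => exact ⟨l 0, r 0, subset_rfl, continuousOn_id, by simp [mapsTo_id], image_id _⟩
  | succ n ih =>
    obtain ⟨u, v, hsub, hcont, hmaps, himage⟩ :=
      ih (fun k hk => hf k (by omega)) (fun k hk => hsurj k (by omega))
    have hcont' : ContinuousOn f^[n + 1] (Icc u v) := by
      rw [iterate_succ']
      exact (hf n n.lt_succ_self).comp hcont (hmaps n le_rfl)
    have hsurj' : SurjOn f^[n + 1] (Icc u v) (Icc (l (n + 1)) (r (n + 1))) := by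
      rw [iterate_succ']
      exact (hsurj n n.lt_succ_self).comp (himage ▸ surjOn_image _ _)
    obtain ⟨u', v', hsub', himage'⟩ := hcont'.exists_Icc_subset_image_eq_Icc hsurj'
    refine ⟨u', v', hsub'.trans hsub, hcont'.mono hsub', fun k hk => ?_, himage'⟩
    rcases Nat.lt_succ_iff_lt_or_eq.1 (Nat.lt_succ_of_le hk) with hk | rfl
    · exact (hmaps k (by omega)).mono_left hsub'
    · exact himage' ▸ mapsTo_image _ _

theorem exists_isPeriodicPt_itinerary {c : ℝ} (hab : a ≤ b) (hbc : b ≤ c)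
    (hf : ContinuousOn f (Icc a c)) (hU : SurjOn f (Icc a b) (Icc a c))
    (hV : SurjOn f (Icc b c) (Icc a b)) {p : ℕ} (hp : 2 ≤ p) :
    ∃ x ∈ Icc b c, IsPeriodicPt f p x ∧ ∀ k, 0 < k → k < p → f^[k] x ∈ Icc a b := by
  set l : ℕ → ℝ := fun k => if k = 0 ∨ k = p then b else a
  set r : ℕ → ℝ := fun k => if k = 0 ∨ k = p then c else b
  have hlr : ∀ k, Icc (l k) (r k) ⊆ Icc a c := fun k => by
    by_cases hk : k = 0 ∨ k = p
    · simp only [l, r, if_pos hk]; exact Icc_subset_Icc hab le_rfl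
    · simp only [l, r, if_neg hk]; exact Icc_subset_Icc le_rfl hbc
  have hsurj : ∀ k < p, SurjOn f (Icc (l k) (r k)) (Icc (l (k + 1)) (r (k + 1))) := by
    intro k hk
    rcases Nat.eq_zero_or_pos k with rfl | hk0
    · simpa [l, r, show (1 : ℕ) ≠ p by omega] using hV
    · have hk' : ¬(k = 0 ∨ k = p) := by omega
      simp only [l, r, if_neg hk']
      exact hU.mono subset_rfl (hlr (k + 1))
  obtain ⟨u, v, hsub, hcont, hmaps, himage⟩ :=
    exists_Icc_subset_iterate_image_eq_Icc l r (fun k _ => hf.mono (hlr k)) hsurj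
  simp only [l, r, true_or, or_true, if_true] at hsub himage
  have huv : u ≤ v := nonempty_Icc.1 (image_nonempty.1 (himage ▸ nonempty_Icc.2 hbc))
  obtain ⟨x, hx, hfix⟩ :=
    exists_mem_Icc_isFixedPt_of_surjOn hcont huv (by rw [SurjOn, himage]; exact hsub)
  refine ⟨x, hsub hx, hfix, fun k hk0 hkp => ?_⟩
  have := hmaps k hkp.le hx
  simpa [l, r, show ¬(k = 0 ∨ k = p) by omega] using this

theorem minimalPeriod_eq_of_itinerary {c x : ℝ} {p : ℕ} (hab : a < b) (hbc : b < c)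
    (ha : f a = c) (hb : f b = a) (hx : x ∈ Icc b c) (hp : 2 ≤ p) (hper : IsPeriodicPt f p x)
    (hit : ∀ k, 0 < k → k < p → f^[k] x ∈ Icc a b) : minimalPeriod f x = p := by
  have hpos := hper.minimalPeriod_pos (by omega)
  refine (hper.minimalPeriod_le (by omega)).antisymm (not_lt.1 fun hlt => ?_)
  have hxb : x = b := le_antisymm ((isPeriodicPt_minimalPeriod f x).eq ▸ hit _ hpos hlt).2 hx.1
  subst hxb
  rcases Nat.lt_or_ge (minimalPeriod f x) 2 with h1 | h2
  · have : IsFixedPt f x := minimalPeriod_eq_one_iff_isFixedPt.1 (by omega)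
    exact hab.ne (hb ▸ this)
  · have := (hit 2 (by omega) (by omega)).2
    simp only [iterate_succ, iterate_zero, comp_apply, id_eq, hb, ha] at this
    exact absurd this hbc.not_ge

theorem exists_minimalPeriod_eq_of_three_cycle {c : ℝ} (hab : a < b) (hbc : b < c)
    (hf : ContinuousOn f (Icc a c)) (ha : f a = c) (hb : f b = a) (hc : f c = b) {p : ℕ}
    (hp : 0 < p) : ∃ x ∈ Icc a c, minimalPeriod f x = p := by
  have hUsub : Icc a b ⊆ Icc a c := Icc_subset_Icc_right hbc.le
  have hVsub : Icc b c ⊆ Icc a c := Icc_subset_Icc_left hab.le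
  have hU : SurjOn f (Icc a b) (Icc a c) := by
    have := intermediate_value_Icc' hab.le (hf.mono hUsub)
    rwa [ha, hb] at this
  have hV : SurjOn f (Icc b c) (Icc a b) := by
    have := intermediate_value_Icc hbc.le (hf.mono hVsub)
    rwa [hb, hc] at this
  rcases Nat.lt_or_ge p 2 with hp1 | hp2
  · obtain ⟨x, hx, hfix⟩ :=
      exists_mem_Icc_isFixedPt_of_surjOn (hf.mono hUsub) hab.le (hU.mono subset_rfl hUsub)
    exact ⟨x, hUsub hx, by rw [minimalPeriod_eq_one_iff_isFixedPt.2 hfix]; omega⟩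
  · obtain ⟨x, hx, hper, hit⟩ := exists_isPeriodicPt_itinerary hab.le hbc.le hf hU hV hp2
    exact ⟨x, hVsub hx, minimalPeriod_eq_of_itinerary hab hbc ha hb hx hp2 hper hit⟩

end IntervalDynamics

theorem cubic_vieta_of_roots {u v w a b c : ℝ} (hab : a ≠ b) (hbc : b ≠ c) (hac : a ≠ c)
    (ha : a ^ 3 + u * a ^ 2 + v * a + w = 0) (hb : b ^ 3 + u * b ^ 2 + v * b + w = 0)
    (hc : c ^ 3 + u * c ^ 2 + v * c + w = 0) :
    a + b + c = -u ∧ a * b + b * c + c * a = v ∧ a * b * c = -w := by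
  have hab' : a ^ 2 + a * b + b ^ 2 + u * (a + b) + v = 0 :=
    mul_left_cancel₀ (sub_ne_zero.2 hab) (by linear_combination ha - hb)
  have hbc' : b ^ 2 + b * c + c ^ 2 + u * (b + c) + v = 0 :=
    mul_left_cancel₀ (sub_ne_zero.2 hbc) (by linear_combination hb - hc)
  have hsum : a + b + c = -u :=
    mul_left_cancel₀ (sub_ne_zero.2 hac) (by linear_combination hab' - hbc')
  have hpair : a * b + b * c + c * a = v := by linear_combination -hab' + (a + b) * hsum
  exact ⟨hsum, hpair, by linear_combination ha - a ^ 2 * hsum + a * hpair⟩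

noncomputable def recursionMap (q t : ℝ) : ℝ := t + q + 1 / t

theorem recursionMap_pos {q t : ℝ} (hq : -2 < q) (ht : 0 < t) : 0 < recursionMap q t := by
  have : recursionMap q t = ((t - 1) ^ 2 + (2 + q) * t) / t := by
    unfold recursionMap; field_simp; ring
  rw [this]
  exact div_pos (by nlinarith [sq_nonneg (t - 1)]) ht

theorem continuousOn_recursionMap {q : ℝ} : ContinuousOn (recursionMap q) (Ioi 0) :=
  ((continuous_id.add continuous_const).continuousOn).add
    (continuousOn_const.div continuousOn_id fun _ ht => ne_of_gt ht)

noncomputable def cycleCubic (q d x : ℝ) : ℝ :=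
  x ^ 3 + (2 * q - d) * x ^ 2 + (q ^ 2 - q * d) * x + (q - d) / 3

theorem cube_mul_cycleCubic_recursionMap {q d x : ℝ} (hd : d ^ 2 = q ^ 2 - 3) (hx : x ≠ 0) :
    x ^ 3 * cycleCubic q d (recursionMap q x) =
      (x ^ 3 + 3 * q * x ^ 2 + (q ^ 2 + q * d + 3) * x + q + d) * cycleCubic q d x := by
  set y := recursionMap q x
  have hy : x * y = x ^ 2 + q * x + 1 := by
    simp only [y, recursionMap]; field_simp
  unfold cycleCubic
  linear_combination
    ((x * y) ^ 2 + x * y * (x ^ 2 + q * x + 1) + (x ^ 2 + q * x + 1) ^ 2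
        + (2 * q - d) * x * (x * y + x ^ 2 + q * x + 1) + (q ^ 2 - q * d) * x ^ 2) * hy
      + (q * x ^ 3 + (q ^ 2 + 1) * x ^ 2 + 4 / 3 * q * x + 1 / 3) * hd

section ThreeCycle

variable {q d : ℝ} (hq1 : -2 < q) (hq : q < 0) (hd0 : 0 ≤ d) (hd : d ^ 2 = q ^ 2 - 3)
include hq1 hq hd0 hd

theorem exists_roots_cycleCubic : ∃ a b c, 0 < a ∧ a < 1 / 2 ∧ 3 / 5 < b ∧ b < c ∧
    cycleCubic q d a = 0 ∧ cycleCubic q d b = 0 ∧ cycleCubic q d c = 0 := by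
  have hcont : Continuous (cycleCubic q d) := by unfold cycleCubic; fun_prop
  have hq' : q < -5 / 3 := by nlinarith
  have h0 : cycleCubic q d 0 < 0 := by unfold cycleCubic; linarith
  have h1 : 0 < cycleCubic q d (1 / 2) := by unfold cycleCubic; nlinarith
  have h2 : 0 < cycleCubic q d (3 / 5) := by unfold cycleCubic; nlinarith
  have h3 : cycleCubic q d 2 < 0 := by
    unfold cycleCubic; nlinarith [mul_nonneg hd0 (by linarith : (0:ℝ) ≤ 13 / 3 + 2 * q)]
  have h4 : 0 < cycleCubic q d 4 := by unfold cycleCubic; nlinarith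
  obtain ⟨a, ⟨ha0, ha⟩, hPa⟩ :=
    intermediate_value_Ioo (by norm_num) hcont.continuousOn ⟨h0, h1⟩
  obtain ⟨b, ⟨hb, hb2⟩, hPb⟩ :=
    intermediate_value_Ioo' (by norm_num) hcont.continuousOn ⟨h3, h2⟩
  obtain ⟨c, ⟨hc2, -⟩, hPc⟩ :=
    intermediate_value_Ioo (by norm_num) hcont.continuousOn ⟨h3, h4⟩
  exact ⟨a, b, c, ha0, ha, hb, hb2.trans hc2, hPa, hPb, hPc⟩

theorem exists_three_cycle_recursionMap : ∃ a b c, 0 < a ∧ a < b ∧ b < c ∧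
    recursionMap q a = c ∧ recursionMap q b = a ∧ recursionMap q c = b := by
  obtain ⟨a, b, c, ha0, ha, hb, hbc, hPa, hPb, hPc⟩ := exists_roots_cycleCubic hq1 hq hd0 hd
  have hab : a < b := by linarith
  have hb0 : 0 < b := by linarith
  have hc0 : 0 < c := by linarith
  obtain ⟨hsum, hpair, hprod⟩ :=
    cubic_vieta_of_roots hab.ne hbc.ne (hab.trans hbc).ne hPa hPb hPc
  have hroot : ∀ y, cycleCubic q d y = 0 → y = a ∨ y = b ∨ y = c := by
    intro y hy
    have : (y - a) * (y - b) * (y - c) = 0 := by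
      unfold cycleCubic at hy
      linear_combination hy - y ^ 2 * hsum + y * hpair - hprod
    simpa only [mul_eq_zero, sub_eq_zero, or_assoc] using this
  have hmaps : ∀ x, 0 < x → cycleCubic q d x = 0 → cycleCubic q d (recursionMap q x) = 0 := by
    intro x hx hPx
    have := cube_mul_cycleCubic_recursionMap hd hx.ne'
    rw [hPx, mul_zero] at this
    exact (mul_eq_zero.1 this).resolve_left (pow_ne_zero 3 hx.ne')
  have hsumF : recursionMap q a + recursionMap q b + recursionMap q c = a + b + c := by
    have : 1 / a + 1 / b + 1 / c = -3 * q := by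
      field_simp
      linear_combination hpair + 3 * q * hprod
    unfold recursionMap
    linear_combination this
  have hq' : q < -5 / 3 := by nlinarith
  have hFa : a < recursionMap q a := by
    have : 2 < 1 / a := by rw [lt_one_div (by norm_num) ha0]; linarith
    unfold recursionMap; linarith
  have hFb : recursionMap q b < b := by
    have : 1 / b < 5 / 3 := by rw [one_div_lt hb0 (by norm_num)]; linarith
    unfold recursionMap; linarith
  have hFc : recursionMap q c < c := by
    have : 1 / c < 5 / 3 := by rw [one_div_lt hc0 (by norm_num)]; linarith
    unfold recursionMap; linarith
  refine ⟨a, b, c, ha0, hab, hbc, ?_⟩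
  -- a self-map of `{a, b, c}` that moves `a` up, `b` and `c` down and preserves `a + b + c`
  -- can only be the cycle `a ↦ c ↦ b ↦ a`
  rcases hroot _ (hmaps a ha0 hPa) with h1 | h1 | h1 <;>
  rcases hroot _ (hmaps b hb0 hPb) with h2 | h2 | h2 <;>
  rcases hroot _ (hmaps c hc0 hPc) with h3 | h3 | h3 <;>
  first | exact ⟨h1, h2, h3⟩ | (exfalso; linarith)

end ThreeCycle

/-- For `−2 < q ≤ −√3`, the recursion `r_{n+1} = r_n + q + 1/r_n` has cycles of
all possible periods: for every positive integer `p` there is a positive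
solution that is periodic with minimal period exactly `p`. -/
theorem stmt_6 (q : ℝ) (hq1 : -2 < q) (hq2 : q ≤ -Real.sqrt 3) :
    ∀ p : ℕ, 0 < p → ∃ r : ℕ → ℝ,
      r 0 > 0 ∧
      (∀ n : ℕ, r n > 0) ∧
      (∀ n : ℕ, r (n + 1) = r n + q + 1 / r n) ∧
      (∀ n : ℕ, r (n + p) = r n) ∧
      (∀ m : ℕ, 0 < m → (∀ n : ℕ, r (n + m) = r n) → p ≤ m) := by
  intro p hp
  have hq : q < 0 := hq2.trans_lt (neg_neg_of_pos (by positivity))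
  have hq3 : 3 ≤ q ^ 2 := by
    nlinarith [Real.sq_sqrt (show (0 : ℝ) ≤ 3 by norm_num), Real.sqrt_nonneg 3]
  obtain ⟨a, b, c, ha0, hab, hbc, hFa, hFb, hFc⟩ := exists_three_cycle_recursionMap hq1 hq
    (Real.sqrt_nonneg (q ^ 2 - 3)) (Real.sq_sqrt (by linarith))
  obtain ⟨x, hx, hxp⟩ := exists_minimalPeriod_eq_of_three_cycle hab hbc
    (continuousOn_recursionMap.mono fun t ht => ha0.trans_le ht.1) hFa hFb hFc hp
  have hper : IsPeriodicPt (recursionMap q) p x := hxp ▸ isPeriodicPt_minimalPeriod _ x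
  have hpos : ∀ n, 0 < (recursionMap q)^[n] x := by
    intro n
    induction n with
    | zero => exact ha0.trans_le hx.1
    | succ n ih => rw [iterate_succ_apply']; exact recursionMap_pos hq1 ih
  refine ⟨fun n => (recursionMap q)^[n] x, hpos 0, hpos, fun n => iterate_succ_apply' _ n x,
    fun n => by simp only [iterate_add_apply, hper.eq], fun m hm hm_per => ?_⟩
  have : (recursionMap q)^[m] x = x := by simpa using hm_per 0
  exact hxp ▸ IsPeriodicPt.minimalPeriod_le hm this
end

section
/- Assume hypotheses (H): b ≠ 0, b'' ≠ 0, |a'| + |a''| > 0, |a''| + |b''| > 0, |a'| + |b'| + |c'| > 0, a = 1, a'·b = b', a''·b = b'', b''·c = b·c'', and b'' = b·(b·c' − b'·c); set q = c + b·b'/b''. If −2 < q < 0, then for every initial point (x₀, y₀) with x₀ + b·y₀ + c > 0 the orbit of the system is well-defined and bounded: there exist sequences (x_n), (y_n) starting at (x₀, y₀) satisfying x_{n+1} = x_n + b·y_n + c and y_{n+1} = (a'·x_n + b'·y_n + c')/(a''·x_n + b''·y_n + c'') with a''·x_n + b''·y_n + c'' ≠ 0 for all n, and there exists M > 0 such that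 |x_n| ≤ M and |y_n| ≤ M for all n. -/
/-!
Write `T = x + b y + c`. The relations among the coefficients make both the numerator and the
denominator of the second equation affine in `T`, and the quotient collapses to
`y' = b'/b'' + 1/(b T)`; consequently `T` obeys the scalar recurrence `T' = T + q + 1/T`.
For `-2 < q < 0` this scalar map leaves an interval `[m, B] ⊂ (0, ∞)` invariant: `T + 1/T ≥ 2`
keeps it above `2 + q`, and it decreases `T` once `T > -1/q`. Then `x' = T` and
`|y'| ≤ |b'/b''| + 1/(|b| m)` are bounded.
-/

open Set

lemma add_add_inv_mem_Icc {q m B T : ℝ} (hq : q < 0) (hm : 0 < m) (hm2 : m ≤ 2 + q)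
    (hB : -q⁻¹ + m⁻¹ ≤ B) (hT : T ∈ Icc m B) : T + q + T⁻¹ ∈ Icc m B := by
  obtain ⟨hmT, hTB⟩ := hT
  have hT0 : 0 < T := hm.trans_le hmT
  constructor
  · have : 2 ≤ T + T⁻¹ := by
      have := mul_inv_cancel₀ hT0.ne'
      nlinarith [sq_nonneg (T - 1), inv_pos.2 hT0]
    linarith
  · rcases le_or_gt T (-q⁻¹) with hsmall | hlarge
    · have : T⁻¹ ≤ m⁻¹ := inv_anti₀ hm hmT
      linarith
    · have : T⁻¹ < -q := inv_lt_of_inv_lt₀ (by linarith [inv_lt_zero.2 hq]) (by rwa [inv_neg])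
      linarith

lemma exists_forall_mem_Icc_of_step {q : ℝ} (hq1 : -2 < q) (hq2 : q < 0) {t : ℕ → ℝ}
    (h0 : 0 < t 0) (hstep : ∀ n, 0 < t n → t (n + 1) = t n + q + (t n)⁻¹) :
    ∃ m B, 0 < m ∧ ∀ n, t n ∈ Icc m B := by
  set m := min (t 0) (2 + q)
  have hm : 0 < m := lt_min h0 (by linarith)
  refine ⟨m, max (t 0) (-q⁻¹ + m⁻¹), hm, fun n => ?_⟩
  induction n with
  | zero => exact ⟨min_le_left _ _, le_max_left _ _⟩
  | succ n ih =>
    rw [hstep n (hm.trans_le ih.1)]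
    exact add_add_inv_mem_Icc hq2 hm (min_le_right _ _) (le_max_right _ _) ih

lemma exists_pos_forall_abs_le_of_succ {x y : ℕ → ℝ} {K L : ℝ} (hx : ∀ n, |x (n + 1)| ≤ K)
    (hy : ∀ n, |y (n + 1)| ≤ L) : ∃ M > 0, ∀ n, |x n| ≤ M ∧ |y n| ≤ M := by
  refine ⟨max (max (max |x 0| K) (max |y 0| L)) 1, by positivity, fun n => ?_⟩
  cases n with
  | zero => exact ⟨by simp, by simp⟩
  | succ n => exact ⟨by simp [hx n], by simp [hy n]⟩

lemma abs_add_inv_mul_le {β b m T : ℝ} (hm : 0 < m) (hmT : m ≤ T) :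
    |β + (b * T)⁻¹| ≤ |β| + (|b| * m)⁻¹ := by
  refine (abs_add_le _ _).trans (add_le_add le_rfl ?_)
  rw [abs_inv, abs_mul, abs_of_pos (hm.trans_le hmT)]
  rcases eq_or_ne b 0 with rfl | hb
  · simp
  · exact inv_anti₀ (by positivity) (mul_le_mul_of_nonneg_left hmT (abs_nonneg b))

section Collapse

variable {b c a' b' c' a'' b'' c'' : ℝ}

lemma denom_eq_mul_affine (hb : b ≠ 0) (h2 : a'' * b = b'') (h3 : b'' * c = b * c'')
    (X Y : ℝ) : a'' * X + b'' * Y + c'' = b'' / b * (X + b * Y + c) := by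
  field_simp
  linear_combination X * h2 - h3

lemma ratio_eq_add_inv (hb : b ≠ 0) (hb'' : b'' ≠ 0) (h1 : a' * b = b') (h2 : a'' * b = b'')
    (h3 : b'' * c = b * c'') (h4 : b'' = b * (b * c' - b' * c)) {X Y : ℝ}
    (hT : X + b * Y + c ≠ 0) :
    (a' * X + b' * Y + c') / (a'' * X + b'' * Y + c'') = b' / b'' + (b * (X + b * Y + c))⁻¹ := by
  have hnum : a' * X + b' * Y + c' = b' / b * (X + b * Y + c) + b'' / b ^ 2 := by
    field_simp
    linear_combination b * X * h1 - h4
  rw [denom_eq_mul_affine hb h2 h3, hnum]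
  field_simp

lemma add_mul_add_add_inv (hb : b ≠ 0) {T : ℝ} (hT : T ≠ 0) :
    T + b * (b' / b'' + (b * T)⁻¹) + c = T + (c + b * b' / b'') + T⁻¹ := by
  field_simp
  ring

end Collapse

theorem stmt_9_general (b c a' b' c' a'' b'' c'' q : ℝ)
    (hb : b ≠ 0) (hb'' : b'' ≠ 0)
    (h1 : a' * b = b') (h2 : a'' * b = b'') (h3 : b'' * c = b * c'')
    (h4 : b'' = b * (b * c' - b' * c))
    (hq : q = c + b * b' / b'') (hq1 : -2 < q) (hq2 : q < 0) :
    ∀ x₀ y₀ : ℝ, x₀ + b * y₀ + c > 0 →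
      ∃ x y : ℕ → ℝ,
        x 0 = x₀ ∧ y 0 = y₀ ∧
        (∀ n : ℕ, a'' * x n + b'' * y n + c'' ≠ 0) ∧
        (∀ n : ℕ, x (n + 1) = x n + b * y n + c) ∧
        (∀ n : ℕ, y (n + 1) =
          (a' * x n + b' * y n + c') / (a'' * x n + b'' * y n + c'')) ∧
        ∃ M : ℝ, M > 0 ∧ ∀ n : ℕ, |x n| ≤ M ∧ |y n| ≤ M := by
  intro x₀ y₀ h₀
  let f : ℝ × ℝ → ℝ × ℝ := fun p =>
    (p.1 + b * p.2 + c, (a' * p.1 + b' * p.2 + c') / (a'' * p.1 + b'' * p.2 + c''))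
  set x : ℕ → ℝ := fun n => (f^[n] (x₀, y₀)).1
  set y : ℕ → ℝ := fun n => (f^[n] (x₀, y₀)).2
  have hx (n : ℕ) : x (n + 1) = x n + b * y n + c := by
    simp only [x, y, f, Function.iterate_succ_apply']
  have hy (n : ℕ) : y (n + 1) =
      (a' * x n + b' * y n + c') / (a'' * x n + b'' * y n + c'') := by
    simp only [x, y, f, Function.iterate_succ_apply']
  set t : ℕ → ℝ := fun n => x n + b * y n + c
  have hy' (n : ℕ) (hn : 0 < t n) : y (n + 1) = b' / b'' + (b * t n)⁻¹ :=
    (hy n).trans (ratio_eq_add_inv hb hb'' h1 h2 h3 h4 hn.ne')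
  have ht (n : ℕ) (hn : 0 < t n) : t (n + 1) = t n + q + (t n)⁻¹ := by
    change x (n + 1) + b * y (n + 1) + c = _
    rw [hx, show x n + b * y n + c = t n from rfl, hy' n hn, hq]
    exact add_mul_add_add_inv hb hn.ne'
  obtain ⟨m, B, hm, hmem⟩ := exists_forall_mem_Icc_of_step hq1 hq2 h₀ ht
  have htpos (n : ℕ) : 0 < t n := hm.trans_le (hmem n).1
  have hxB (n : ℕ) : |x (n + 1)| ≤ B := by
    rw [hx, abs_of_pos (htpos n)]
    exact (hmem n).2
  have hyB (n : ℕ) : |y (n + 1)| ≤ |b' / b''| + (|b| * m)⁻¹ := by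
    rw [hy' n (htpos n)]
    exact abs_add_inv_mul_le hm (hmem n).1
  refine ⟨x, y, rfl, rfl, fun n => ?_, hx, hy, exists_pos_forall_abs_le_of_succ hxB hyB⟩
  rw [denom_eq_mul_affine hb h2 h3]
  exact mul_ne_zero (div_ne_zero hb'' hb) (htpos n).ne'

/-- Under hypotheses (H) with `−2 < q < 0`, every orbit of the system with
`x₀ + b·y₀ + c > 0` is well-defined and bounded. -/
theorem stmt_9 (a b c a' b' c' a'' b'' c'' q : ℝ)
    (hb : b ≠ 0) (hb'' : b'' ≠ 0)
    (hnt1 : |a'| + |a''| > 0) (hnt2 : |a''| + |b''| > 0)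
    (hnt3 : |a'| + |b'| + |c'| > 0)
    (ha : a = 1) (h1 : a' * b = b') (h2 : a'' * b = b'') (h3 : b'' * c = b * c'')
    (h4 : b'' = b * (b * c' - b' * c))
    (hq : q = c + b * b' / b'') (hq1 : -2 < q) (hq2 : q < 0) :
    ∀ x₀ y₀ : ℝ, x₀ + b * y₀ + c > 0 →
      ∃ x y : ℕ → ℝ,
        x 0 = x₀ ∧ y 0 = y₀ ∧
        (∀ n : ℕ, a'' * x n + b'' * y n + c'' ≠ 0) ∧
        (∀ n : ℕ, x (n + 1) = x n + b * y n + c) ∧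
        (∀ n : ℕ, y (n + 1) =
          (a' * x n + b' * y n + c') / (a'' * x n + b'' * y n + c'')) ∧
        ∃ M : ℝ, M > 0 ∧ ∀ n : ℕ, |x n| ≤ M ∧ |y n| ≤ M :=
  stmt_9_general b c a' b' c' a'' b'' c'' q hb hb'' h1 h2 h3 h4 hq hq1 hq2
end

section
/- Assume hypotheses (H): b ≠ 0, b'' ≠ 0, |a'| + |a''| > 0, |a''| + |b''| > 0, |a'| + |b'| + |c'| > 0, a = 1, a'·b = b', a''·b = b'', b''·c = b·c'', and b'' = b·(b·c' − b'·c); set q = c + b·b'/b''. Suppose −√(5/2) < q < −√2, and set x₁ = (−q − √(q² − 2))/2, x₂ = (−q + √(q² − 2))/2, y₁ = (x₂ − x₁ − c)/b, y₂ = (x₁ − x₂ − c)/b. Then (x₁, y₁) ≠ (x₂, y₂), the denominators a''·x_i + b''·y_i + c'' are nonzero for i = 1, 2, and {(x₁, y₁), (x₂, y₂)} is a cycle of minimal period 2 of the system: x₂ = x₁ + b·y₁ + c, y₂ = (a'·x₁ + b'·y₁ + c')/(a''·x₁ + b''·y₁ + c''), x₁ = x₂ + b·y₂ + c, and y₁ =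 (a'·x₂ + b'·y₂ + c')/(a''·x₂ + b''·y₂ + c''). -/
/-!
Under (H) we have `b' = a'b`, `b'' = a''b`, `c'' = a''c` and `a'' = b(c' - a'c)`, so the
denominator is `a''` times the next `x`-value `X = x + by + c`, and the next `y`-value satisfies
`b·y' + c = q + 1/X`. Hence the system folds to `x_{n+2} = x_{n+1} + q + 1/x_{n+1}`, and the roots of `x² + qx + 1/2` (sum `-q`, product `1/2`) are swapped by this map.
-/

noncomputable def foldedStep (q x : ℝ) : ℝ := x + q + x⁻¹

lemma foldedStep_eq_of_add_eq_of_mul_eq {q x y : ℝ} (hsum : x + y = -q) (hprod : x * y = 1 / 2) :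
    foldedStep q x = y := by
  have hx : x ≠ 0 := by rintro rfl; norm_num at hprod
  have hinv : x⁻¹ = 2 * y := by field_simp; linarith
  rw [foldedStep, hinv]
  linarith

section Folding

variable {b c a' b' c' a'' b'' c'' : ℝ}

lemma denom_eq_mul_next (hb : b ≠ 0) (h2 : a'' * b = b'') (h3 : b'' * c = b * c'') (x y : ℝ) :
    a'' * x + b'' * y + c'' = a'' * (x + b * y + c) := by
  have hc'' : c'' = a'' * c := by
    apply mul_left_cancel₀ hb
    rw [← h3, ← h2]
    ring
  rw [hc'', ← h2]
  ring

lemma mul_numer_eq (hb : b ≠ 0) (h1 : a' * b = b') (h2 : a'' * b = b'')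
    (h4 : b'' = b * (b * c' - b' * c)) (x y : ℝ) :
    b * (a' * x + b' * y + c') = b * a' * (x + b * y + c) + a'' := by
  have ha'' : a'' = b * (c' - a' * c) := by
    apply mul_right_cancel₀ hb
    rw [h2, h4, ← h1]
    ring
  rw [ha'', ← h1]
  ring

lemma denom_ne_zero (hb : b ≠ 0) (hb'' : b'' ≠ 0) (h2 : a'' * b = b'') (h3 : b'' * c = b * c'')
    {x y X : ℝ} (hX : x + b * y + c = X) (hX0 : X ≠ 0) :
    a'' * x + b'' * y + c'' ≠ 0 := by
  rw [denom_eq_mul_next hb h2 h3, hX]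
  exact mul_ne_zero (left_ne_zero_of_mul (h2 ▸ hb'')) hX0

lemma eq_update_of_foldedStep (hb : b ≠ 0) (hb'' : b'' ≠ 0) (h1 : a' * b = b')
    (h2 : a'' * b = b'') (h3 : b'' * c = b * c'') (h4 : b'' = b * (b * c' - b' * c))
    {x y X y' : ℝ} (hX : x + b * y + c = X) (hX0 : X ≠ 0)
    (hy' : X + b * y' + c = foldedStep (c + b * b' / b'') X) :
    y' = (a' * x + b' * y + c') / (a'' * x + b'' * y + c'') := by
  have ha'' : a'' ≠ 0 := left_ne_zero_of_mul (h2 ▸ hb'')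
  rw [eq_div_iff (denom_ne_zero hb hb'' h2 h3 hX hX0), denom_eq_mul_next hb h2 h3, hX]
  apply mul_left_cancel₀ hb
  rw [foldedStep, ← h2, ← h1] at hy'
  field_simp at hy'
  linear_combination hy' - mul_numer_eq hb h1 h2 h4 x y - b * a' * hX

end Folding

theorem stmt_10_general (b c a' b' c' a'' b'' c'' q : ℝ)
    (hb : b ≠ 0) (hb'' : b'' ≠ 0)
    (h1 : a' * b = b') (h2 : a'' * b = b'') (h3 : b'' * c = b * c'')
    (h4 : b'' = b * (b * c' - b' * c))
    (hq : q = c + b * b' / b'')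
    (hq2 : q < -Real.sqrt 2)
    (x₁ x₂ y₁ y₂ : ℝ)
    (hx₁ : x₁ = (-q - Real.sqrt (q ^ 2 - 2)) / 2)
    (hx₂ : x₂ = (-q + Real.sqrt (q ^ 2 - 2)) / 2)
    (hy₁ : y₁ = (x₂ - x₁ - c) / b)
    (hy₂ : y₂ = (x₁ - x₂ - c) / b) :
    (x₁, y₁) ≠ (x₂, y₂) ∧
    a'' * x₁ + b'' * y₁ + c'' ≠ 0 ∧
    a'' * x₂ + b'' * y₂ + c'' ≠ 0 ∧
    x₂ = x₁ + b * y₁ + c ∧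
    y₂ = (a' * x₁ + b' * y₁ + c') / (a'' * x₁ + b'' * y₁ + c'') ∧
    x₁ = x₂ + b * y₂ + c ∧
    y₁ = (a' * x₂ + b' * y₂ + c') / (a'' * x₂ + b'' * y₂ + c'') := by
  have hdisc : 0 < q ^ 2 - 2 := by
    have := Real.sq_sqrt (show (0 : ℝ) ≤ 2 by norm_num)
    nlinarith [Real.sqrt_nonneg 2]
  have hs := Real.sq_sqrt hdisc.le
  have hs0 := Real.sqrt_pos.mpr hdisc
  have hsum : x₁ + x₂ = -q := by rw [hx₁, hx₂]; ring
  have hprod : x₁ * x₂ = 1 / 2 := by rw [hx₁, hx₂]; linear_combination (-1 / 4 : ℝ) * hs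
  have hne : x₁ ≠ x₂ := by rw [hx₁, hx₂]; intro h; linarith
  have hx₁0 : x₁ ≠ 0 := left_ne_zero_of_mul (by rw [hprod]; norm_num)
  have hx₂0 : x₂ ≠ 0 := right_ne_zero_of_mul (by rw [hprod]; norm_num)
  have hX₁ : x₁ + b * y₁ + c = x₂ := by rw [hy₁]; field_simp; ring
  have hX₂ : x₂ + b * y₂ + c = x₁ := by rw [hy₂]; field_simp; ring
  have hstep₁ : x₁ + b * y₁ + c = foldedStep q x₁ :=
    hX₁.trans (foldedStep_eq_of_add_eq_of_mul_eq hsum hprod).symm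
  have hstep₂ : x₂ + b * y₂ + c = foldedStep q x₂ :=
    hX₂.trans (foldedStep_eq_of_add_eq_of_mul_eq (by linarith) (by rwa [mul_comm])).symm
  subst hq
  exact ⟨fun h => hne (congrArg Prod.fst h),
    denom_ne_zero hb hb'' h2 h3 hX₁ hx₂0, denom_ne_zero hb hb'' h2 h3 hX₂ hx₁0,
    hX₁.symm, eq_update_of_foldedStep hb hb'' h1 h2 h3 h4 hX₁ hx₂0 hstep₂,
    hX₂.symm, eq_update_of_foldedStep hb hb'' h1 h2 h3 h4 hX₂ hx₁0 hstep₁⟩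

/-- Under hypotheses (H) with `−√(5/2) < q < −√2`, the system has a cycle of
minimal period 2 given by `x₁ = (−q − √(q² − 2))/2`, `x₂ = (−q + √(q² − 2))/2`
and the corresponding `y`-values from the folding. -/
theorem stmt_10 (a b c a' b' c' a'' b'' c'' q : ℝ)
    (hb : b ≠ 0) (hb'' : b'' ≠ 0)
    (hnt1 : |a'| + |a''| > 0) (hnt2 : |a''| + |b''| > 0)
    (hnt3 : |a'| + |b'| + |c'| > 0)
    (ha : a = 1) (h1 : a' * b = b') (h2 : a'' * b = b'') (h3 : b'' * c = b * c'')
    (h4 : b'' = b * (b * c' - b' * c))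
    (hq : q = c + b * b' / b'')
    (hq1 : -Real.sqrt (5 / 2) < q) (hq2 : q < -Real.sqrt 2)
    (x₁ x₂ y₁ y₂ : ℝ)
    (hx₁ : x₁ = (-q - Real.sqrt (q ^ 2 - 2)) / 2)
    (hx₂ : x₂ = (-q + Real.sqrt (q ^ 2 - 2)) / 2)
    (hy₁ : y₁ = (x₂ - x₁ - c) / b)
    (hy₂ : y₂ = (x₁ - x₂ - c) / b) :
    (x₁, y₁) ≠ (x₂, y₂) ∧
    a'' * x₁ + b'' * y₁ + c'' ≠ 0 ∧
    a'' * x₂ + b'' * y₂ + c'' ≠ 0 ∧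
    x₂ = x₁ + b * y₁ + c ∧
    y₂ = (a' * x₁ + b' * y₁ + c') / (a'' * x₁ + b'' * y₁ + c'') ∧
    x₁ = x₂ + b * y₂ + c ∧
    y₁ = (a' * x₂ + b' * y₂ + c') / (a'' * x₂ + b'' * y₂ + c'') :=
  stmt_10_general b c a' b' c' a'' b'' c'' q hb hb'' h1 h2 h3 h4 hq hq2 x₁ x₂ y₁ y₂ hx₁ hx₂ hy₁ hy₂
end

section
/- Assume hypotheses (H): b ≠ 0, b'' ≠ 0, |a'| + |a''| > 0, |a''| + |b''| > 0, |a'| + |b'| + |c'| > 0, a = 1, a'·b = b', a''·b = b'', b''·c = b·c'', and b'' = b·(b·c' − b'·c). Suppose in addition b·b' = −b''·(c + √3) (equivalently q = c + b·b'/b'' = −√3). Set x₁ = (2/√3)·(1 + cos(π/9)), x₂ = x₁ − √3 + 1/x₁, x₃ = x₂ − √3 + 1/x₂, y₁ = (x₂ − x₁ − c)/b, y₂ = (x₃ − x₂ − c)/b, y₃ = (x₁ − x₃ − c)/b. Then the points (x₁, y₁), (x₂, y₂), (x₃, y₃) are pairwise distinct, the denominators a''·x_i + b''·y_i + c'' are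 nonzero for i = 1, 2, 3, and these three points form a cycle of minimal period 3 of the system: applying one step of the system to (x₁, y₁) gives (x₂, y₂), to (x₂, y₂) gives (x₃, y₃), and to (x₃, y₃) gives (x₁, y₁). -/
/-!
Under the hypotheses the denominator of the second equation is `(b''/b) · x_{n+1}`, and the
system folds to the one-dimensional map `x_{n+2} = x_{n+1} - √3 + 1 / x_{n+1}`. In the
coordinate `u = √3 x - 2` this map acts on the roots of `u³ - 3u - 1` (the numbers
`2 cos θ` with `cos 3θ = 1/2`) as the polynomial `u ↦ u² - u - 2`, which permutes them
cyclically, because `(u² - u - 2)² = 2 - u` modulo the cubic. The root `2 cos (π/9)`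
corresponds to `x₁`.
-/

open Real

namespace PeriodThree

def rootCycle (u : ℝ) : ℝ := u ^ 2 - u - 2

section Cubic

variable {u : ℝ}

theorem two_add_ne_zero_of_cubic (hu : u ^ 3 - 3 * u - 1 = 0) : 2 + u ≠ 0 := by
  intro h
  have : u = -2 := by linarith
  subst this
  norm_num at hu

theorem rootCycle_sq (hu : u ^ 3 - 3 * u - 1 = 0) : rootCycle u ^ 2 = 2 - u := by
  unfold rootCycle
  linear_combination (u - 2) * hu

theorem rootCycle_cubic (hu : u ^ 3 - 3 * u - 1 = 0) :
    rootCycle u ^ 3 - 3 * rootCycle u - 1 = 0 := by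
  have hsq := rootCycle_sq hu
  unfold rootCycle at *
  linear_combination (u ^ 2 - u - 2) * hsq - hu

theorem rootCycle_ne_self (hu : u ^ 3 - 3 * u - 1 = 0) : rootCycle u ≠ u := by
  intro h
  unfold rootCycle at h
  have hu' : u = -1 := by linear_combination (1 / 3 : ℝ) * hu - (u + 2) / 3 * h
  subst hu'
  norm_num at h

theorem rootCycle_rootCycle_rootCycle (hu : u ^ 3 - 3 * u - 1 = 0) :
    rootCycle (rootCycle (rootCycle u)) = u := by
  have hsq := rootCycle_sq hu
  have h2 : rootCycle (rootCycle u) = 2 - u ^ 2 := by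
    unfold rootCycle at *
    linear_combination hsq
  rw [h2]
  unfold rootCycle
  linear_combination u * hu

end Cubic

theorem cubic_two_cos_pi_div_nine :
    (2 * cos (π / 9)) ^ 3 - 3 * (2 * cos (π / 9)) - 1 = 0 := by
  have h := cos_three_mul (π / 9)
  rw [show 3 * (π / 9) = π / 3 by ring, cos_pi_div_three] at h
  linear_combination -2 * h

theorem sqrt_three_mul_fold {u x : ℝ} (hu : u ^ 3 - 3 * u - 1 = 0) (hx : √3 * x = 2 + u) :
    √3 * (x - √3 + 1 / x) = 2 + rootCycle u := by
  have hu2 := two_add_ne_zero_of_cubic hu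
  have hx0 : x ≠ 0 := by
    rintro rfl
    exact hu2 (by linarith)
  have hs : √3 * √3 = 3 := mul_self_sqrt (by norm_num)
  have e : √3 * (x - √3 + 1 / x) = √3 * x - 3 + 3 / (√3 * x) := by
    field_simp
    linear_combination (1 - √3 * x) * hs
  rw [e, hx]
  unfold rootCycle
  field_simp
  linear_combination -hu

theorem fold_orbit {u x₁ x₂ x₃ : ℝ} (hu : u ^ 3 - 3 * u - 1 = 0) (hx₁ : √3 * x₁ = 2 + u)
    (hx₂ : x₂ = x₁ - √3 + 1 / x₁) (hx₃ : x₃ = x₂ - √3 + 1 / x₂) :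
    x₁ = x₃ - √3 + 1 / x₃ ∧ x₁ ≠ 0 ∧ x₂ ≠ 0 ∧ x₃ ≠ 0 ∧ x₁ ≠ x₂ ∧ x₁ ≠ x₃ ∧ x₂ ≠ x₃ := by
  have hu₂ := rootCycle_cubic hu
  have hx₂' : √3 * x₂ = 2 + rootCycle u := hx₂ ▸ sqrt_three_mul_fold hu hx₁
  have hx₃' : √3 * x₃ = 2 + rootCycle (rootCycle u) := hx₃ ▸ sqrt_three_mul_fold hu₂ hx₂'
  have hs : √3 ≠ 0 := by positivity
  have nonzero {v x : ℝ} (hv : v ^ 3 - 3 * v - 1 = 0) (hx : √3 * x = 2 + v) : x ≠ 0 := by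
    rintro rfl
    exact two_add_ne_zero_of_cubic hv (by linarith)
  have distinct {v w x y : ℝ} (hvw : v ≠ w) (hx : √3 * x = 2 + v) (hy : √3 * y = 2 + w) :
      x ≠ y := by
    rintro rfl
    exact hvw (by linarith)
  have hu₃ := rootCycle_cubic hu₂
  have h13 : rootCycle (rootCycle (rootCycle u)) ≠ rootCycle (rootCycle u) :=
    rootCycle_ne_self hu₃
  rw [rootCycle_rootCycle_rootCycle hu] at h13
  refine ⟨mul_left_cancel₀ hs ?_, nonzero hu hx₁, nonzero hu₂ hx₂', nonzero hu₃ hx₃',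
    distinct (rootCycle_ne_self hu).symm hx₁ hx₂', distinct h13 hx₁ hx₃',
    distinct (rootCycle_ne_self hu₂).symm hx₂' hx₃'⟩
  rw [sqrt_three_mul_fold hu₃ hx₃', rootCycle_rootCycle_rootCycle hu, hx₁]

section RationalSystem

variable {b c a' b' c' a'' b'' c'' : ℝ}

theorem mul_denom_eq (h2 : a'' * b = b'') (h3 : b'' * c = b * c'') (x y : ℝ) :
    b * (a'' * x + b'' * y + c'') = b'' * (x + b * y + c) := by
  linear_combination x * h2 - h3

theorem mul_numer_eq (h1 : a' * b = b') (h4 : b'' = b * (b * c' - b' * c)) (x y : ℝ) :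
    b ^ 2 * (a' * x + b' * y + c') = b * b' * (x + b * y + c) + b'' := by
  linear_combination b * x * h1 - h4

theorem rational_step_of_fold (hb : b ≠ 0) (hb'' : b'' ≠ 0) (h1 : a' * b = b')
    (h2 : a'' * b = b'') (h3 : b'' * c = b * c'') (h4 : b'' = b * (b * c' - b' * c)) {d : ℝ}
    (hd : b * b' = -b'' * (c + d)) ⦃x y x' y' x'' : ℝ⦄ (hy : y = (x' - x - c) / b)
    (hx' : x' ≠ 0) (hx'' : x'' = x' - d + 1 / x') (hy' : y' = (x'' - x' - c) / b) :
    a'' * x + b'' * y + c'' ≠ 0 ∧ x' = x + b * y + c ∧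
      y' = (a' * x + b' * y + c') / (a'' * x + b'' * y + c'') := by
  have hX : x + b * y + c = x' := by rw [hy]; field_simp; ring
  have hD := mul_denom_eq h2 h3 x y
  have hN := mul_numer_eq h1 h4 x y
  rw [hX] at hD hN
  have hD0 : a'' * x + b'' * y + c'' ≠ 0 := by
    intro h
    rw [h, mul_zero] at hD
    exact mul_ne_zero hb'' hx' hD.symm
  refine ⟨hD0, hX.symm, ?_⟩
  have hby' : b * y' = -d - c + 1 / x' := by rw [hy', hx'']; field_simp; ring
  have hinv : x' * (1 / x') = 1 := mul_one_div_cancel hx'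
  rw [eq_div_iff hD0]
  apply mul_left_cancel₀ (mul_ne_zero (pow_ne_zero 2 hb) hx')
  linear_combination x' * b * (a'' * x + b'' * y + c'') * hby' + x' * (-d - c + 1 / x') * hD
    + b'' * x' * hinv - x' * hN - x' ^ 2 * hd

end RationalSystem

end PeriodThree

open PeriodThree in
theorem stmt_11_general (b c a' b' c' a'' b'' c'' : ℝ)
    (hb : b ≠ 0) (hb'' : b'' ≠ 0)
    (h1 : a' * b = b') (h2 : a'' * b = b'') (h3 : b'' * c = b * c'')
    (h4 : b'' = b * (b * c' - b' * c))
    (hq : b * b' = -b'' * (c + Real.sqrt 3))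
    (x₁ x₂ x₃ y₁ y₂ y₃ : ℝ)
    (hx₁ : x₁ = 2 / Real.sqrt 3 * (1 + Real.cos (Real.pi / 9)))
    (hx₂ : x₂ = x₁ - Real.sqrt 3 + 1 / x₁)
    (hx₃ : x₃ = x₂ - Real.sqrt 3 + 1 / x₂)
    (hy₁ : y₁ = (x₂ - x₁ - c) / b)
    (hy₂ : y₂ = (x₃ - x₂ - c) / b)
    (hy₃ : y₃ = (x₁ - x₃ - c) / b) :
    (x₁, y₁) ≠ (x₂, y₂) ∧ (x₁, y₁) ≠ (x₃, y₃) ∧ (x₂, y₂) ≠ (x₃, y₃) ∧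
    a'' * x₁ + b'' * y₁ + c'' ≠ 0 ∧
    a'' * x₂ + b'' * y₂ + c'' ≠ 0 ∧
    a'' * x₃ + b'' * y₃ + c'' ≠ 0 ∧
    x₂ = x₁ + b * y₁ + c ∧
    y₂ = (a' * x₁ + b' * y₁ + c') / (a'' * x₁ + b'' * y₁ + c'') ∧
    x₃ = x₂ + b * y₂ + c ∧
    y₃ = (a' * x₂ + b' * y₂ + c') / (a'' * x₂ + b'' * y₂ + c'') ∧
    x₁ = x₃ + b * y₃ + c ∧
    y₁ = (a' * x₃ + b' * y₃ + c') / (a'' * x₃ + b'' * y₃ + c'') := by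
  have hx₁' : √3 * x₁ = 2 + 2 * Real.cos (Real.pi / 9) := by
    rw [hx₁]
    field_simp
  obtain ⟨hx₁₃, hx₁0, hx₂0, hx₃0, h12, h13, h23⟩ :=
    fold_orbit cubic_two_cos_pi_div_nine hx₁' hx₂ hx₃
  have step := rational_step_of_fold hb hb'' h1 h2 h3 h4 hq
  obtain ⟨hD₁, hX₂, hY₂⟩ := step hy₁ hx₂0 hx₃ hy₂
  obtain ⟨hD₂, hX₃, hY₃⟩ := step hy₂ hx₃0 hx₁₃ hy₃
  obtain ⟨hD₃, hX₁, hY₁⟩ := step hy₃ hx₁0 hx₂ hy₁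
  exact ⟨ne_of_apply_ne Prod.fst h12, ne_of_apply_ne Prod.fst h13, ne_of_apply_ne Prod.fst h23,
    hD₁, hD₂, hD₃, hX₂, hY₂, hX₃, hY₃, hX₁, hY₁⟩

/-- Under hypotheses (H) with `b·b' = −b''·(c + √3)` (i.e. `q = −√3`), the
system has a cycle of minimal period 3 given by `x₁ = (2/√3)(1 + cos(π/9))`,
`x₂ = f(x₁)`, `x₃ = f(x₂)` with `f(t) = t − √3 + 1/t`, and the corresponding
`y`-values from the folding. -/
theorem stmt_11 (a b c a' b' c' a'' b'' c'' : ℝ)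
    (hb : b ≠ 0) (hb'' : b'' ≠ 0)
    (hnt1 : |a'| + |a''| > 0) (hnt2 : |a''| + |b''| > 0)
    (hnt3 : |a'| + |b'| + |c'| > 0)
    (ha : a = 1) (h1 : a' * b = b') (h2 : a'' * b = b'') (h3 : b'' * c = b * c'')
    (h4 : b'' = b * (b * c' - b' * c))
    (hq : b * b' = -b'' * (c + Real.sqrt 3))
    (x₁ x₂ x₃ y₁ y₂ y₃ : ℝ)
    (hx₁ : x₁ = 2 / Real.sqrt 3 * (1 + Real.cos (Real.pi / 9)))
    (hx₂ : x₂ = x₁ - Real.sqrt 3 + 1 / x₁)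
    (hx₃ : x₃ = x₂ - Real.sqrt 3 + 1 / x₂)
    (hy₁ : y₁ = (x₂ - x₁ - c) / b)
    (hy₂ : y₂ = (x₃ - x₂ - c) / b)
    (hy₃ : y₃ = (x₁ - x₃ - c) / b) :
    (x₁, y₁) ≠ (x₂, y₂) ∧ (x₁, y₁) ≠ (x₃, y₃) ∧ (x₂, y₂) ≠ (x₃, y₃) ∧
    a'' * x₁ + b'' * y₁ + c'' ≠ 0 ∧
    a'' * x₂ + b'' * y₂ + c'' ≠ 0 ∧
    a'' * x₃ + b'' * y₃ + c'' ≠ 0 ∧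
    x₂ = x₁ + b * y₁ + c ∧
    y₂ = (a' * x₁ + b' * y₁ + c') / (a'' * x₁ + b'' * y₁ + c'') ∧
    x₃ = x₂ + b * y₂ + c ∧
    y₃ = (a' * x₂ + b' * y₂ + c') / (a'' * x₂ + b'' * y₂ + c'') ∧
    x₁ = x₃ + b * y₃ + c ∧
    y₁ = (a' * x₃ + b' * y₃ + c') / (a'' * x₃ + b'' * y₃ + c'') :=
  stmt_11_general b c a' b' c' a'' b'' c'' hb hb'' h1 h2 h3 h4 hq x₁ x₂ x₃ y₁ y₂ y₃ hx₁ hx₂ hx₃ hy₁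
    hy₂ hy₃
end

section
/- Assume hypotheses (H): b ≠ 0, b'' ≠ 0, |a'| + |a''| > 0, |a''| + |b''| > 0, |a'| + |b'| + |c'| > 0, a = 1, a'·b = b', a''·b = b'', b''·c = b·c'', and b'' = b·(b·c' − b'·c); set q = c + b·b'/b''. If −2 < q < −√3, then the system exhibits Li–Yorke chaotic behavior: there exists an uncountable set S of initial points (x₀, y₀) with x₀ + b·y₀ + c > 0 such that each orbit starting in S is well-defined (all denominators a''·x_n + b''·y_n + c'' are nonzero) and bounded, and for any two distinct initial points in S, the Euclidean distance between the corresponding orbits at time n has strictly positive limsup and zero liminf as n → ∞. -/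
/-- One step of the planar rational system (with `a = 1`):
`(x, y) ↦ (x + b·y + c, (a'·x + b'·y + c')/(a''·x + b''·y + c''))`. -/
noncomputable def sysStep (b c a' b' c' a'' b'' c'' : ℝ) (p : ℝ × ℝ) : ℝ × ℝ :=
  (p.1 + b * p.2 + c,
    (a' * p.1 + b' * p.2 + c') / (a'' * p.1 + b'' * p.2 + c''))

/-!
Under (H) a step depends only on `w = x + b·y + c`: it sends `(x, y)` to
`(w, b'/b'' + 1/(b·w))`, and `w` itself evolves by the one-dimensional map
`f(w) = w + 1/w - p` with `p = -q`. Since `w ↦ (w, b'/b'' + 1/(b·w))` is bi-Lipschitz on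
sets bounded away from `0`, it suffices to find a scrambled set for `f`.

For `p > √3` the square `g = f ∘ f` has a horseshoe on `K = [w₀, 1/p]`, where `f w₀ = p`
(`w₀ = ReducedMap.leftEnd p`):
two disjoint subintervals of `K`, each mapped by `g` onto `K` with expansion at least `51/50`.
Composing the contracting inverse branches along a sequence `σ : ℕ → Bool` converges to the
point of `K` with `g`-itinerary `σ`. Sequences that differ infinitely often but share
arbitrarily long common blocks give an uncountable set of points whose orbits come together and
separate again infinitely often.
-/

open Filter Set Function Metric
open scoped NNReal Topology

section Coding

variable {X ι : Type*} [MetricSpace X]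

structure ContractingBranches (K : Set X) (h : ι → X → X) (r : ℝ≥0) : Prop where
  mapsTo : ∀ j, MapsTo (h j) K K
  lipschitzOnWith : ∀ j, LipschitzOnWith r (h j) K
  lt_one : r < 1

def codingApprox (h : ι → X → X) (x₀ : X) : ℕ → (ℕ → ι) → X
  | 0, _ => x₀
  | n + 1, σ => h (σ 0) (codingApprox h x₀ n fun i => σ (i + 1))

noncomputable def codingMap (h : ι → X → X) (x₀ : X) (σ : ℕ → ι) : X :=
  haveI : Nonempty X := ⟨x₀⟩
  limUnder atTop fun n => codingApprox h x₀ n σ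

variable {K : Set X} {h : ι → X → X} {r : ℝ≥0} {x₀ : X}

namespace ContractingBranches

variable (hB : ContractingBranches K h r) (hx₀ : x₀ ∈ K)
include hB hx₀

lemma codingApprox_mem : ∀ n σ, codingApprox h x₀ n σ ∈ K
  | 0, _ => hx₀
  | n + 1, _ => hB.mapsTo _ (codingApprox_mem n _)

lemma dist_codingApprox_le (hK : Bornology.IsBounded K) {N : ℕ} :
    ∀ {m n : ℕ} {σ τ : ℕ → ι}, N ≤ m → N ≤ n → (∀ i < N, σ i = τ i) →
      dist (codingApprox h x₀ m σ) (codingApprox h x₀ n τ) ≤ r ^ N * diam K := by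
  induction N with
  | zero =>
    intro m n σ τ _ _ _
    simpa using
      dist_le_diam_of_mem hK (hB.codingApprox_mem hx₀ m σ) (hB.codingApprox_mem hx₀ n τ)
  | succ N ih =>
    rintro (_ | m) (_ | n) σ τ hm hn hστ
    · omega
    · omega
    · omega
    have hhead : σ 0 = τ 0 := hστ 0 N.succ_pos
    calc dist (codingApprox h x₀ (m + 1) σ) (codingApprox h x₀ (n + 1) τ)
        ≤ r * dist (codingApprox h x₀ m fun i => σ (i + 1))
            (codingApprox h x₀ n fun i => τ (i + 1)) := by
          rw [codingApprox, codingApprox, hhead]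
          exact (hB.lipschitzOnWith _).dist_le_mul _ (hB.codingApprox_mem hx₀ _ _) _
            (hB.codingApprox_mem hx₀ _ _)
      _ ≤ r * (r ^ N * diam K) := by
          gcongr
          exact ih (by omega) (by omega) fun i hi => hστ (i + 1) (by omega)
      _ = r ^ (N + 1) * diam K := by ring

variable [CompleteSpace X] (hK : Bornology.IsBounded K)
include hK

lemma tendsto_codingApprox (σ : ℕ → ι) :
    Tendsto (fun n => codingApprox h x₀ n σ) atTop (𝓝 (codingMap h x₀ σ)) := by
  refine (cauchySeq_of_le_tendsto_0 (fun N => (r : ℝ) ^ N * diam K) (fun m n N hm hn =>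
    hB.dist_codingApprox_le hx₀ hK (σ := σ) (τ := σ) hm hn fun _ _ => rfl) ?_).tendsto_limUnder
  simpa using (tendsto_pow_atTop_nhds_zero_of_lt_one r.2 hB.lt_one).mul_const (diam K)

lemma codingMap_mem (hKc : IsClosed K) (σ : ℕ → ι) : codingMap h x₀ σ ∈ K :=
  hKc.mem_of_tendsto (hB.tendsto_codingApprox hx₀ hK σ)
    (Eventually.of_forall fun n => hB.codingApprox_mem hx₀ n σ)

lemma dist_codingMap_le {N : ℕ} {σ τ : ℕ → ι} (hστ : ∀ i < N, σ i = τ i) :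
    dist (codingMap h x₀ σ) (codingMap h x₀ τ) ≤ r ^ N * diam K :=
  le_of_tendsto ((hB.tendsto_codingApprox hx₀ hK σ).dist (hB.tendsto_codingApprox hx₀ hK τ))
    (eventually_atTop.2 ⟨N, fun _ hn => hB.dist_codingApprox_le hx₀ hK hn hn hστ⟩)

lemma codingMap_eq (hKc : IsClosed K) (σ : ℕ → ι) :
    codingMap h x₀ σ = h (σ 0) (codingMap h x₀ fun i => σ (i + 1)) := by
  set τ : ℕ → ι := fun i => σ (i + 1)
  refine tendsto_nhds_unique
    ((hB.tendsto_codingApprox hx₀ hK σ).comp (tendsto_add_atTop_nat 1)) ?_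
  have hτ : Tendsto (fun n => codingApprox h x₀ n τ) atTop (𝓝[K] codingMap h x₀ τ) :=
    tendsto_nhdsWithin_iff.2 ⟨hB.tendsto_codingApprox hx₀ hK τ,
      Eventually.of_forall fun n => hB.codingApprox_mem hx₀ n τ⟩
  exact ((hB.lipschitzOnWith (σ 0)).continuousOn _
    (hB.codingMap_mem hx₀ hK hKc τ)).tendsto.comp hτ

end ContractingBranches

end Coding

section Expanding

variable {X ι : Type*} [MetricSpace X] [CompleteSpace X] {g : X → X} {K : Set X}
  {s : ι → Set X} {r : ℝ≥0}

theorem exists_coding_of_expanding (hr : r < 1) (hKc : IsClosed K)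
    (hKb : Bornology.IsBounded K) (hKne : K.Nonempty) (hsK : ∀ j, s j ⊆ K)
    (hgs : ∀ j, K ⊆ g '' s j)
    (hexp : ∀ j, ∀ x ∈ s j, ∀ y ∈ s j, dist x y ≤ r * dist (g x) (g y)) :
    ∃ π : (ℕ → ι) → X, (∀ σ, π σ ∈ s (σ 0)) ∧
      (∀ k σ, g^[k] (π σ) = π fun i => σ (i + k)) ∧
      ∀ N σ τ, (∀ i < N, σ i = τ i) → dist (π σ) (π τ) ≤ r ^ N * diam K := by
  obtain ⟨x₀, hx₀⟩ := hKne
  have : Nonempty X := ⟨x₀⟩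
  set h : ι → X → X := fun j => invFunOn g (s j)
  have h_mem : ∀ j, ∀ y ∈ K, h j y ∈ s j := fun j y hy => invFunOn_mem (hgs j hy)
  have g_h : ∀ j, ∀ y ∈ K, g (h j y) = y := fun j y hy => invFunOn_eq (hgs j hy)
  have hB : ContractingBranches K h r :=
    { mapsTo := fun j y hy => hsK j (h_mem j y hy)
      lipschitzOnWith := fun j => LipschitzOnWith.of_dist_le_mul fun y hy y' hy' => by
        simpa only [g_h j y hy, g_h j y' hy'] using
          hexp j _ (h_mem j y hy) _ (h_mem j y' hy')
      lt_one := hr }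
  have hπ := hB.codingMap_eq hx₀ hKb hKc
  have hπK := hB.codingMap_mem hx₀ hKb hKc
  refine ⟨codingMap h x₀, fun σ => hπ σ ▸ h_mem _ _ (hπK _), ?_,
    fun N σ τ => hB.dist_codingMap_le hx₀ hKb⟩
  intro k
  induction k with
  | zero => exact fun σ => rfl
  | succ k ih =>
    intro σ
    rw [iterate_succ_apply, hπ σ, g_h _ _ (hπK _), ih]
    rfl

end Expanding

/-- The symbol `t i` is written at each square position `m * m` with `m.unpair.1 = i`, and
`false` everywhere else: two codes of different sequences differ infinitely often, yet all codes
agree on the ever longer blocks between consecutive squares. -/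
def sparseCode (t : ℕ → Bool) (n : ℕ) : Bool :=
  if n.sqrt * n.sqrt = n then t n.sqrt.unpair.1 else false

lemma sparseCode_mul_self (t : ℕ → Bool) (m : ℕ) : sparseCode t (m * m) = t m.unpair.1 := by
  simp [sparseCode, Nat.sqrt_eq]

lemma sparseCode_of_lt_of_lt (t : ℕ → Bool) {m n : ℕ} (h₁ : m * m < n)
    (h₂ : n < (m + 1) * (m + 1)) : sparseCode t n = false := by
  have hs : n.sqrt = m :=
    le_antisymm (Nat.lt_succ_iff.1 (Nat.sqrt_lt.2 h₂)) (Nat.le_sqrt.2 h₁.le)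
  simp [sparseCode, hs, h₁.ne]

lemma frequently_sparseCode_ne {t t' : ℕ → Bool} (h : t ≠ t') :
    ∃ᶠ n in atTop, sparseCode t n ≠ sparseCode t' n := by
  obtain ⟨i, hi⟩ := Function.ne_iff.1 h
  refine frequently_atTop.2 fun N => ⟨Nat.pair i N * Nat.pair i N, ?_, ?_⟩
  · exact (Nat.right_le_pair i N).trans (Nat.le_mul_self _)
  · simpa [sparseCode_mul_self] using hi

lemma frequently_sparseCode_eq (L : ℕ) :
    ∃ᶠ k in atTop, ∀ t t' : ℕ → Bool, ∀ i < L, sparseCode t (k + i) = sparseCode t' (k + i) := by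
  refine frequently_atTop.2 fun N => ⟨(L + N) * (L + N) + 1, by nlinarith, fun t t' i hi => ?_⟩
  have h₁ : (L + N) * (L + N) < (L + N) * (L + N) + 1 + i := by omega
  have h₂ : (L + N) * (L + N) + 1 + i < (L + N + 1) * (L + N + 1) := by nlinarith
  rw [sparseCode_of_lt_of_lt t h₁ h₂, sparseCode_of_lt_of_lt t' h₁ h₂]

instance : Uncountable (ℕ → Bool) := by
  rw [← Cardinal.aleph0_lt_mk_iff]
  simpa using Cardinal.cantor Cardinal.aleph0

section Scrambled

variable {X : Type*} [MetricSpace X] [CompleteSpace X] {g : X → X} {K : Set X}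
  {s : Bool → Set X} {r : ℝ≥0} {δ : ℝ}

theorem exists_scrambled_of_expanding (hr : r < 1) (hKc : IsClosed K)
    (hKb : Bornology.IsBounded K) (hKne : K.Nonempty) (hsK : ∀ j, s j ⊆ K)
    (hgs : ∀ j, K ⊆ g '' s j)
    (hexp : ∀ j, ∀ x ∈ s j, ∀ y ∈ s j, dist x y ≤ r * dist (g x) (g y))
    (hδ : 0 < δ) (hsep : ∀ x ∈ s false, ∀ y ∈ s true, δ ≤ dist x y) :
    ∃ W : Set X, ¬ W.Countable ∧ (∀ x ∈ W, ∀ n, g^[n] x ∈ K) ∧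
      ∀ x ∈ W, ∀ y ∈ W, x ≠ y → (∃ᶠ n in atTop, δ ≤ dist (g^[n] x) (g^[n] y)) ∧
        ∀ ε > 0, ∃ᶠ n in atTop, dist (g^[n] x) (g^[n] y) ≤ ε := by
  obtain ⟨π, hπs, hπg, hπdist⟩ := exists_coding_of_expanding hr hKc hKb hKne hsK hgs hexp
  have hπsep : ∀ σ τ : ℕ → Bool, σ 0 ≠ τ 0 → δ ≤ dist (π σ) (π τ) := by
    intro σ τ hστ
    have hσs := hπs σ
    have hτs := hπs τ
    cases hσ : σ 0 <;> cases hτ : τ 0 <;>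
      simp only [hσ, hτ, ne_eq, not_true_eq_false] at hστ hσs hτs
    · exact hsep _ hσs _ hτs
    · exact dist_comm (π σ) (π τ) ▸ hsep _ hτs _ hσs
  have hfar : ∀ t t', t ≠ t' →
      ∃ᶠ n in atTop, δ ≤ dist (g^[n] (π (sparseCode t))) (g^[n] (π (sparseCode t'))) :=
    fun t t' h => (frequently_sparseCode_ne h).mono fun k hk => by
      rw [hπg, hπg]
      exact hπsep _ _ (by simpa using hk)
  have hinj : Injective (π ∘ sparseCode) := by
    intro t t' h
    by_contra hne
    obtain ⟨k, hk⟩ := (hfar t t' hne).exists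
    simp only [comp_apply] at h
    rw [h, dist_self] at hk
    linarith
  refine ⟨range (π ∘ sparseCode), fun hW => ?_, ?_, ?_⟩
  · exact not_countable_univ (by simpa using hW.preimage hinj)
  · rintro _ ⟨t, rfl⟩ n
    rw [comp_apply, hπg]
    exact hsK _ (hπs _)
  rintro _ ⟨t, rfl⟩ _ ⟨t', rfl⟩ htt'
  refine ⟨hfar t t' fun h => htt' (h ▸ rfl), fun ε hε => ?_⟩
  obtain ⟨L, hL⟩ := (((tendsto_pow_atTop_nhds_zero_of_lt_one r.2 hr).mul_const
    (diam K)).eventually (gt_mem_nhds (by simpa using hε))).exists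
  refine (frequently_sparseCode_eq L).mono fun k hk => ?_
  simp only [comp_apply, hπg]
  exact (hπdist L _ _ fun i hi => by simpa only [add_comm] using hk t t' i hi).trans hL.le

end Scrambled

lemma inv_mem_Ioc_zero_one {p : ℝ} (hp : 1 ≤ p) : p⁻¹ ∈ Ioc 0 1 :=
  ⟨inv_pos.2 (by linarith), inv_le_one_of_one_le₀ hp⟩

lemma add_inv_strictAntiOn : StrictAntiOn (fun x : ℝ => x + x⁻¹) (Ioc 0 1) := by
  rintro x ⟨hx, -⟩ y ⟨hy, hy1⟩ hxy
  have key : x + x⁻¹ - (y + y⁻¹) = (y - x) * (1 - x * y) / (x * y) := by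
    field_simp
    ring
  have : 0 < (y - x) * (1 - x * y) / (x * y) :=
    div_pos (mul_pos (by linarith) (by nlinarith)) (by positivity)
  simp only
  linarith

noncomputable def smallRoot (s : ℝ) : ℝ := (s - √(s ^ 2 - 4)) / 2

section SmallRoot

variable {s s' x : ℝ}

lemma smallRoot_mem (hs : 2 ≤ s) : smallRoot s ∈ Ioc 0 1 := by
  have he := Real.sq_sqrt (by nlinarith : 0 ≤ s ^ 2 - 4)
  have he0 := Real.sqrt_nonneg (s ^ 2 - 4)
  constructor <;> unfold smallRoot <;> nlinarith

lemma smallRoot_add_inv (hs : 2 ≤ s) : smallRoot s + (smallRoot s)⁻¹ = s := by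
  have he := Real.sq_sqrt (by nlinarith : 0 ≤ s ^ 2 - 4)
  rw [inv_eq_of_mul_eq_one_right (b := (s + √(s ^ 2 - 4)) / 2)]
  · unfold smallRoot; ring
  · unfold smallRoot; linear_combination -he / 4

lemma smallRoot_lt_iff (hs : 2 ≤ s) (hx : x ∈ Ioc 0 1) : smallRoot s < x ↔ x + x⁻¹ < s := by
  conv_rhs => rw [← smallRoot_add_inv hs]
  exact (add_inv_strictAntiOn.lt_iff_gt hx (smallRoot_mem hs)).symm

lemma lt_smallRoot_iff (hs : 2 ≤ s) (hx : x ∈ Ioc 0 1) : x < smallRoot s ↔ s < x + x⁻¹ := by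
  conv_rhs => rw [← smallRoot_add_inv hs]
  exact (add_inv_strictAntiOn.lt_iff_gt (smallRoot_mem hs) hx).symm

lemma smallRoot_le_iff (hs : 2 ≤ s) (hx : x ∈ Ioc 0 1) : smallRoot s ≤ x ↔ x + x⁻¹ ≤ s := by
  simpa only [not_lt] using (lt_smallRoot_iff hs hx).not

lemma le_smallRoot_iff (hs : 2 ≤ s) (hx : x ∈ Ioc 0 1) : x ≤ smallRoot s ↔ s ≤ x + x⁻¹ := by
  simpa only [not_lt] using (smallRoot_lt_iff hs hx).not

lemma smallRoot_lt_smallRoot_iff (hs : 2 ≤ s) (hs' : 2 ≤ s') :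
    smallRoot s < smallRoot s' ↔ s' < s := by
  rw [smallRoot_lt_iff hs (smallRoot_mem hs'), smallRoot_add_inv hs']

end SmallRoot

noncomputable def reducedMap (p x : ℝ) : ℝ := x + x⁻¹ - p

section ReducedMapLemmas

variable {p s x y : ℝ}

lemma reducedMap_smallRoot (hs : 2 ≤ s) : reducedMap p (smallRoot s) = s - p := by
  rw [reducedMap, smallRoot_add_inv hs]

lemma reducedMap_inv (x : ℝ) : reducedMap p x⁻¹ = reducedMap p x := by
  rw [reducedMap, reducedMap, inv_inv, add_comm]

lemma reducedMap_inv_self (p : ℝ) : reducedMap p p⁻¹ = p⁻¹ := by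
  rw [reducedMap, inv_inv]
  ring

lemma reducedMap_sub_reducedMap (hx : x ≠ 0) (hy : y ≠ 0) :
    reducedMap p x - reducedMap p y = (x - y) * (1 - (x * y)⁻¹) := by
  unfold reducedMap
  field_simp
  ring

lemma reducedMap_antitoneOn : AntitoneOn (reducedMap p) (Ioc 0 1) :=
  fun _ hx _ hy hxy => sub_le_sub_right (add_inv_strictAntiOn.antitoneOn hx hy hxy) p

lemma continuousOn_reducedMap : ContinuousOn (reducedMap p) {0}ᶜ :=
  (continuousOn_id.add (continuousOn_inv₀ (G₀ := ℝ))).sub continuousOn_const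

lemma continuousOn_reducedMap_iterate_two {s : Set ℝ}
    (hs : ∀ x ∈ s, x ≠ 0 ∧ reducedMap p x ≠ 0) : ContinuousOn (reducedMap p)^[2] s :=
  continuousOn_reducedMap.comp (continuousOn_reducedMap.mono fun x hx => (hs x hx).1)
    fun x hx => (hs x hx).2

lemma reducedMap_iterate_two_sub (hx : x ≠ 0) (hy : y ≠ 0) (hfx : reducedMap p x ≠ 0)
    (hfy : reducedMap p y ≠ 0) :
    (reducedMap p)^[2] x - (reducedMap p)^[2] y =
      (x - y) * (1 - (x * y)⁻¹) * (1 - (reducedMap p x * reducedMap p y)⁻¹) := by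
  simp only [iterate_succ, iterate_zero, comp_apply, id_eq]
  rw [reducedMap_sub_reducedMap hfx hfy, reducedMap_sub_reducedMap hx hy]

lemma sub_one_le_abs_one_sub_inv {z m : ℝ} (hz : 0 < z) (hzm : z ≤ m) :
    m⁻¹ - 1 ≤ |1 - z⁻¹| := by
  rw [abs_sub_comm]
  exact (sub_le_sub_right (inv_anti₀ hz hzm) 1).trans (le_abs_self _)

lemma one_sub_inv_le_abs_one_sub_inv {z m : ℝ} (hm : 0 < m) (hmz : m ≤ z) :
    1 - m⁻¹ ≤ |1 - z⁻¹| :=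
  (sub_le_sub_left (inv_anti₀ hm hmz) 1).trans (le_abs_self _)

lemma dist_le_dist_reducedMap_iterate_two {A B : ℝ} {r : ℝ≥0} (hx : 0 < x) (hy : 0 < y)
    (hfx : reducedMap p x ≠ 0) (hfy : reducedMap p y ≠ 0) (hB : 0 ≤ B) (hr : 1 ≤ r * (A * B))
    (hxy : A ≤ |1 - (x * y)⁻¹|) (hfxy : B ≤ |1 - (reducedMap p x * reducedMap p y)⁻¹|) :
    dist x y ≤ r * dist ((reducedMap p)^[2] x) ((reducedMap p)^[2] y) := by
  rw [Real.dist_eq, Real.dist_eq, reducedMap_iterate_two_sub hx.ne' hy.ne' hfx hfy, abs_mul,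
    abs_mul]
  calc |x - y| ≤ r * (A * B) * |x - y| := le_mul_of_one_le_left (abs_nonneg _) hr
    _ ≤ r * (|1 - (x * y)⁻¹| * |1 - (reducedMap p x * reducedMap p y)⁻¹|) * |x - y| := by
        gcongr
    _ = r * (|x - y| * |1 - (x * y)⁻¹| * |1 - (reducedMap p x * reducedMap p y)⁻¹|) := by
        ring

end ReducedMapLemmas

namespace ReducedMap

/-! With `f = reducedMap p` and `g = f ∘ f`: `f (leftEnd p) = p`, `f p = p⁻¹ = f p⁻¹`,
`f (preLeftEnd p) = f (preLeftEnd p)⁻¹ = leftEnd p`, `f (gapLeft p) = (preLeftEnd p)⁻¹` and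
`f (gapRight p) = preLeftEnd p`. So `g` maps `[leftEnd p, gapLeft p]` and `[gapRight p, p⁻¹]`
onto `[leftEnd p, p⁻¹]`. -/

noncomputable def leftEnd (p : ℝ) : ℝ := smallRoot (2 * p)

noncomputable def preLeftEnd (p : ℝ) : ℝ := smallRoot (p + leftEnd p)

noncomputable def gapLeft (p : ℝ) : ℝ := smallRoot (p + (preLeftEnd p)⁻¹)

noncomputable def gapRight (p : ℝ) : ℝ := smallRoot (p + preLeftEnd p)

variable {p x : ℝ}

lemma leftEnd_mem (hp : 1 ≤ p) : leftEnd p ∈ Ioc 0 1 := smallRoot_mem (by linarith)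

lemma reducedMap_leftEnd (hp : 1 ≤ p) : reducedMap p (leftEnd p) = p := by
  rw [leftEnd, reducedMap_smallRoot (by linarith)]
  ring

lemma leftEnd_lt_inv (hp : 1 < p) : leftEnd p < p⁻¹ := by
  rw [leftEnd, smallRoot_lt_iff (by linarith) (inv_mem_Ioc_zero_one hp.le), inv_inv]
  linarith [inv_lt_one_of_one_lt₀ hp]

-- `433 / 250 < √3`; the bounds on `preLeftEnd p` and `gapLeft p` below are what the expansion
-- estimates on the two branches need.
lemma le_add_leftEnd (hp : 433 / 250 < p) : 81 / 100 + 100 / 81 ≤ p + leftEnd p := by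
  set y := 81 / 100 + 100 / 81 - p with hy_def
  rcases le_or_gt y 0 with hy | hy
  · linarith [(leftEnd_mem (p := p) (by linarith)).1]
  suffices y ≤ leftEnd p by linarith
  rw [leftEnd, le_smallRoot_iff (by linarith) ⟨hy, by norm_num [hy_def]; linarith⟩,
    ← sub_nonneg]
  have : y + y⁻¹ - 2 * p = (y ^ 2 - 2 * p * y + 1) / y := by
    field_simp
    ring
  rw [this]
  exact div_nonneg (by rw [hy_def]; nlinarith [sq_nonneg (p - 433 / 250)]) hy.le

lemma two_le_add_leftEnd (hp : 433 / 250 < p) : 2 ≤ p + leftEnd p := by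
  linarith [le_add_leftEnd hp]

lemma preLeftEnd_mem (hp : 433 / 250 < p) : preLeftEnd p ∈ Ioc 0 1 :=
  smallRoot_mem (two_le_add_leftEnd hp)

lemma preLeftEnd_le (hp : 433 / 250 < p) : preLeftEnd p ≤ 81 / 100 := by
  rw [preLeftEnd, smallRoot_le_iff (two_le_add_leftEnd hp) ⟨by norm_num, by norm_num⟩]
  linarith [le_add_leftEnd hp]

lemma le_inv_preLeftEnd (hp : 433 / 250 < p) : 100 / 81 ≤ (preLeftEnd p)⁻¹ := by
  rw [← inv_div]
  exact inv_anti₀ (preLeftEnd_mem hp).1 (preLeftEnd_le hp)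

lemma inv_lt_preLeftEnd (hp : 433 / 250 < p) : p⁻¹ < preLeftEnd p := by
  rw [preLeftEnd, ← not_le,
    smallRoot_le_iff (two_le_add_leftEnd hp) (inv_mem_Ioc_zero_one (by linarith)), inv_inv,
    not_le]
  linarith [leftEnd_lt_inv (p := p) (by linarith)]

lemma reducedMap_preLeftEnd (hp : 433 / 250 < p) : reducedMap p (preLeftEnd p) = leftEnd p := by
  rw [preLeftEnd, reducedMap_smallRoot (two_le_add_leftEnd hp)]
  ring

lemma two_le_add_inv_preLeftEnd (hp : 433 / 250 < p) : 2 ≤ p + (preLeftEnd p)⁻¹ := by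
  linarith [(one_le_inv₀ (preLeftEnd_mem hp).1).2 (preLeftEnd_mem hp).2]

lemma two_le_add_preLeftEnd (hp : 433 / 250 < p) : 2 ≤ p + preLeftEnd p := by
  have h := inv_lt_preLeftEnd hp
  have : p * p⁻¹ = 1 := mul_inv_cancel₀ (by linarith)
  nlinarith [sq_nonneg (p - 1), inv_pos.2 (by linarith : 0 < p)]

lemma gapLeft_mem (hp : 433 / 250 < p) : gapLeft p ∈ Ioc 0 1 :=
  smallRoot_mem (two_le_add_inv_preLeftEnd hp)

lemma gapLeft_le (hp : 433 / 250 < p) : gapLeft p ≤ 97 / 250 := by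
  rw [gapLeft, smallRoot_le_iff (two_le_add_inv_preLeftEnd hp) ⟨by norm_num, by norm_num⟩]
  have := le_inv_preLeftEnd hp
  norm_num at this ⊢
  linarith

lemma reducedMap_gapLeft (hp : 433 / 250 < p) :
    reducedMap p (gapLeft p) = (preLeftEnd p)⁻¹ := by
  rw [gapLeft, reducedMap_smallRoot (two_le_add_inv_preLeftEnd hp)]
  ring

lemma gapRight_mem (hp : 433 / 250 < p) : gapRight p ∈ Ioc 0 1 :=
  smallRoot_mem (two_le_add_preLeftEnd hp)

lemma reducedMap_gapRight (hp : 433 / 250 < p) : reducedMap p (gapRight p) = preLeftEnd p := by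
  rw [gapRight, reducedMap_smallRoot (two_le_add_preLeftEnd hp)]
  ring

lemma leftEnd_lt_gapLeft (hp : 433 / 250 < p) : leftEnd p < gapLeft p := by
  rw [leftEnd, gapLeft,
    smallRoot_lt_smallRoot_iff (by linarith) (two_le_add_inv_preLeftEnd hp)]
  have := (inv_lt_inv₀ (preLeftEnd_mem hp).1 (inv_pos.2 (by linarith))).2 (inv_lt_preLeftEnd hp)
  rw [inv_inv] at this
  linarith

lemma gapLeft_lt_gapRight (hp : 433 / 250 < p) : gapLeft p < gapRight p := by
  rw [gapLeft, gapRight, smallRoot_lt_smallRoot_iff (two_le_add_inv_preLeftEnd hp)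
    (two_le_add_preLeftEnd hp)]
  have : preLeftEnd p < 1 := (preLeftEnd_le hp).trans_lt (by norm_num)
  linarith [(one_lt_inv₀ (preLeftEnd_mem hp).1).2 this]

lemma gapRight_lt_inv (hp : 433 / 250 < p) : gapRight p < p⁻¹ := by
  rw [gapRight, smallRoot_lt_iff (two_le_add_preLeftEnd hp)
    (inv_mem_Ioc_zero_one (by linarith)), inv_inv]
  linarith [inv_lt_preLeftEnd hp]

lemma iterate_two_leftEnd (hp : 1 < p) : (reducedMap p)^[2] (leftEnd p) = p⁻¹ := by
  rw [iterate_succ_apply, iterate_one, reducedMap_leftEnd hp.le, reducedMap]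
  ring

lemma iterate_two_inv (p : ℝ) : (reducedMap p)^[2] p⁻¹ = p⁻¹ := by
  rw [iterate_succ_apply, iterate_one, reducedMap_inv_self, reducedMap_inv_self]

lemma iterate_two_gapLeft (hp : 433 / 250 < p) :
    (reducedMap p)^[2] (gapLeft p) = leftEnd p := by
  rw [iterate_succ_apply, iterate_one, reducedMap_gapLeft hp, reducedMap_inv,
    reducedMap_preLeftEnd hp]

lemma iterate_two_gapRight (hp : 433 / 250 < p) :
    (reducedMap p)^[2] (gapRight p) = leftEnd p := by
  rw [iterate_succ_apply, iterate_one, reducedMap_gapRight hp, reducedMap_preLeftEnd hp]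

lemma inv_preLeftEnd_le_reducedMap (hp : 433 / 250 < p) (hx : x ∈ Icc (leftEnd p) (gapLeft p)) :
    (preLeftEnd p)⁻¹ ≤ reducedMap p x := by
  rw [← reducedMap_gapLeft hp]
  exact reducedMap_antitoneOn ⟨(leftEnd_mem (by linarith)).1.trans_le hx.1,
    hx.2.trans (gapLeft_mem hp).2⟩ (gapLeft_mem hp) hx.2

lemma reducedMap_mem_of_mem_right (hp : 433 / 250 < p) (hx : x ∈ Icc (gapRight p) p⁻¹) :
    reducedMap p x ∈ Icc p⁻¹ (preLeftEnd p) := by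
  have hinv := inv_mem_Ioc_zero_one (p := p) (by linarith)
  have hx' : x ∈ Ioc 0 1 := ⟨(gapRight_mem hp).1.trans_le hx.1, hx.2.trans hinv.2⟩
  constructor
  · rw [← reducedMap_inv_self p]
    exact reducedMap_antitoneOn hx' hinv hx.2
  · rw [← reducedMap_gapRight hp]
    exact reducedMap_antitoneOn (gapRight_mem hp) hx' hx.1

lemma mapsTo_reducedMap (hp : 1 < p) :
    MapsTo (reducedMap p) (Icc (leftEnd p) p⁻¹) (Icc p⁻¹ p) := by
  intro x hx
  have hinv := inv_mem_Ioc_zero_one hp.le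
  have hx' : x ∈ Ioc 0 1 := ⟨(leftEnd_mem hp.le).1.trans_le hx.1, hx.2.trans hinv.2⟩
  constructor
  · rw [← reducedMap_inv_self p]
    exact reducedMap_antitoneOn hx' hinv hx.2
  · have := reducedMap_antitoneOn (p := p) (leftEnd_mem hp.le) hx' hx.1
    rwa [reducedMap_leftEnd hp.le] at this

lemma dist_le_dist_iterate_two_left (hp : 433 / 250 < p) :
    ∀ x ∈ Icc (leftEnd p) (gapLeft p), ∀ y ∈ Icc (leftEnd p) (gapLeft p),
      dist x y ≤ (50 / 51 : ℝ≥0) * dist ((reducedMap p)^[2] x) ((reducedMap p)^[2] y) := by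
  intro x hx y hy
  have h0 := (leftEnd_mem (p := p) (by linarith)).1
  have hx0 : 0 < x := h0.trans_le hx.1
  have hy0 : 0 < y := h0.trans_le hy.1
  have hβ := gapLeft_le hp
  have hfx := (le_inv_preLeftEnd hp).trans (inv_preLeftEnd_le_reducedMap hp hx)
  have hfy := (le_inv_preLeftEnd hp).trans (inv_preLeftEnd_le_reducedMap hp hy)
  refine dist_le_dist_reducedMap_iterate_two (A := (250 / 97) ^ 2 - 1)
    (B := 1 - (81 / 100) ^ 2) hx0 hy0 (by positivity) (by positivity) (by norm_num)
    (by norm_num) ?_ ?_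
  · convert sub_one_le_abs_one_sub_inv (mul_pos hx0 hy0)
      (mul_le_mul (hx.2.trans hβ) (hy.2.trans hβ) hy0.le (by norm_num)) using 2
    norm_num
  · convert one_sub_inv_le_abs_one_sub_inv (by norm_num)
      (mul_le_mul hfx hfy (by norm_num) (by positivity)) using 2
    norm_num

lemma dist_le_dist_iterate_two_right (hp : 433 / 250 < p) :
    ∀ x ∈ Icc (gapRight p) p⁻¹, ∀ y ∈ Icc (gapRight p) p⁻¹,
      dist x y ≤ (50 / 51 : ℝ≥0) * dist ((reducedMap p)^[2] x) ((reducedMap p)^[2] y) := by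
  intro x hx y hy
  have h0 := (gapRight_mem hp).1
  have hx0 : 0 < x := h0.trans_le hx.1
  have hy0 : 0 < y := h0.trans_le hy.1
  have hpinv : p⁻¹ ≤ 250 / 433 := by
    rw [← inv_div]
    exact inv_anti₀ (by norm_num) hp.le
  have hfx := reducedMap_mem_of_mem_right hp hx
  have hfy := reducedMap_mem_of_mem_right hp hy
  have hpos : 0 < p⁻¹ := inv_pos.2 (by linarith)
  have ht := preLeftEnd_le hp
  refine dist_le_dist_reducedMap_iterate_two (A := (433 / 250) ^ 2 - 1)
    (B := (100 / 81) ^ 2 - 1) hx0 hy0 (by linarith [hfx.1]) (by linarith [hfy.1])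
    (by norm_num) (by norm_num) ?_ ?_
  · convert sub_one_le_abs_one_sub_inv (mul_pos hx0 hy0)
      (mul_le_mul (hx.2.trans hpinv) (hy.2.trans hpinv) hy0.le (by norm_num)) using 2
    norm_num
  · convert sub_one_le_abs_one_sub_inv (mul_pos (hpos.trans_le hfx.1) (hpos.trans_le hfy.1))
      (mul_le_mul (hfx.2.trans ht) (hfy.2.trans ht) (hpos.le.trans hfy.1) (by norm_num))
      using 2
    norm_num

lemma Icc_subset_image_left (hp : 433 / 250 < p) :
    Icc (leftEnd p) p⁻¹ ⊆ (reducedMap p)^[2] '' Icc (leftEnd p) (gapLeft p) := by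
  have hcont : ContinuousOn (reducedMap p)^[2] (Icc (leftEnd p) (gapLeft p)) := by
    refine continuousOn_reducedMap_iterate_two fun x hx => ⟨?_, ?_⟩
    · exact ((leftEnd_mem (by linarith)).1.trans_le hx.1).ne'
    · exact ((inv_pos.2 (preLeftEnd_mem hp).1).trans_le
        (inv_preLeftEnd_le_reducedMap hp hx)).ne'
  simpa only [iterate_two_leftEnd (by linarith : 1 < p), iterate_two_gapLeft hp] using
    intermediate_value_Icc' (leftEnd_lt_gapLeft hp).le hcont

lemma Icc_subset_image_right (hp : 433 / 250 < p) :
    Icc (leftEnd p) p⁻¹ ⊆ (reducedMap p)^[2] '' Icc (gapRight p) p⁻¹ := by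
  have hcont : ContinuousOn (reducedMap p)^[2] (Icc (gapRight p) p⁻¹) := by
    refine continuousOn_reducedMap_iterate_two fun x hx => ⟨?_, ?_⟩
    · exact ((gapRight_mem hp).1.trans_le hx.1).ne'
    · exact ((inv_pos.2 (by linarith)).trans_le (reducedMap_mem_of_mem_right hp hx).1).ne'
  simpa only [iterate_two_inv, iterate_two_gapRight hp] using
    intermediate_value_Icc (gapRight_lt_inv hp).le hcont

theorem exists_scrambled (hp : 433 / 250 < p) :
    ∃ W : Set ℝ, ¬ W.Countable ∧ (∀ w ∈ W, ∀ n, (reducedMap p)^[n] w ∈ Icc (leftEnd p) p) ∧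
      ∀ w ∈ W, ∀ w' ∈ W, w ≠ w' →
        (∃ δ > 0, ∃ᶠ n in atTop, δ ≤ dist ((reducedMap p)^[n] w) ((reducedMap p)^[n] w')) ∧
        ∀ ε > 0, ∃ᶠ n in atTop, dist ((reducedMap p)^[n] w) ((reducedMap p)^[n] w') ≤ ε := by
  have hp₁ : 1 < p := by linarith
  have hK : leftEnd p ≤ p⁻¹ := (leftEnd_lt_inv hp₁).le
  have hgap : 0 < gapRight p - gapLeft p := sub_pos.2 (gapLeft_lt_gapRight hp)
  have hβ := leftEnd_lt_gapLeft hp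
  have hα := gapRight_lt_inv hp
  obtain ⟨W, hWc, hWK, hW⟩ := exists_scrambled_of_expanding (K := Icc (leftEnd p) p⁻¹)
    (s := fun j => cond j (Icc (gapRight p) p⁻¹) (Icc (leftEnd p) (gapLeft p)))
    (r := 50 / 51) (by norm_num) isClosed_Icc (isBounded_Icc _ _) (nonempty_Icc.2 hK)
    (by rintro (_ | _) <;> apply Icc_subset_Icc <;> linarith)
    (by rintro (_ | _); exacts [Icc_subset_image_left hp, Icc_subset_image_right hp])
    (by rintro (_ | _)
        exacts [dist_le_dist_iterate_two_left hp, dist_le_dist_iterate_two_right hp])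
    hgap (fun x hx y hy => by
      rw [Real.dist_eq, abs_sub_comm]
      exact le_abs.2 (Or.inl (by linarith [hx.2, hy.1])))
  have hmul : Tendsto (fun k : ℕ => 2 * k) atTop atTop :=
    tendsto_atTop_mono (fun k => Nat.le_mul_of_pos_left k two_pos) tendsto_id
  refine ⟨W, hWc, fun w hw n => ?_, fun w hw w' hw' hne => ?_⟩
  · have hinv : p⁻¹ ≤ p := (inv_lt_one_of_one_lt₀ hp₁).le.trans hp₁.le
    obtain ⟨k, rfl | rfl⟩ := Nat.even_or_odd' n
    · have := hWK w hw k
      rw [← iterate_mul] at this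
      exact ⟨this.1, this.2.trans hinv⟩
    · have := mapsTo_reducedMap hp₁ (hWK w hw k)
      rw [← iterate_mul, ← iterate_succ_apply' (reducedMap p)] at this
      exact ⟨hK.trans this.1, this.2⟩
  obtain ⟨hfar, hnear⟩ := hW w hw w' hw' hne
  simp only [← iterate_mul] at hfar hnear
  exact ⟨⟨_, hgap, hmul.frequently hfar⟩, fun ε hε => hmul.frequently (hnear ε hε)⟩

end ReducedMap

lemma limsup_pos_and_liminf_eq_zero {D d : ℕ → ℝ} {B C : ℝ} (hD : ∀ n, 0 ≤ D n)
    (hlow : ∀ n, d n ≤ D (n + 1)) (hup : ∀ n, D (n + 1) ≤ C * d n) (hdB : ∀ n, d n ≤ B)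
    (hC : 0 < C) (hfar : ∃ δ > 0, ∃ᶠ n in atTop, δ ≤ d n)
    (hnear : ∀ ε > 0, ∃ᶠ n in atTop, d n ≤ ε) :
    0 < limsup D atTop ∧ liminf D atTop = 0 := by
  have hshift := tendsto_add_atTop_nat 1
  obtain ⟨δ, hδ, hfar⟩ := hfar
  have hDB : ∀ᶠ n in atTop, D n ≤ C * B := eventually_atTop.2
    ⟨1, fun n hn => by
      obtain ⟨k, rfl⟩ := Nat.exists_eq_add_of_le' hn
      exact (hup k).trans (mul_le_mul_of_nonneg_left (hdB k) hC.le)⟩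
  refine ⟨hδ.trans_le (le_limsup_of_frequently_le ?_ (isBoundedUnder_of_eventually_le hDB)),
    le_antisymm (le_of_forall_pos_le_add fun ε hε => ?_) (le_liminf_of_le ?_ (.of_forall hD))⟩
  · exact hshift.frequently (hfar.mono fun n hn => hn.trans (hlow n))
  · rw [zero_add]
    refine liminf_le_of_frequently_le (hshift.frequently ?_)
      (isBoundedUnder_of_eventually_ge (.of_forall hD))
    refine (hnear (ε / C) (by positivity)).mono fun n hn => (hup n).trans ?_
    rwa [le_div_iff₀' hC] at hn
  · exact IsCoboundedUnder.of_frequently_le (hshift.frequently ((hnear 1 one_pos).mono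
      fun n hn => (hup n).trans (mul_le_mul_of_nonneg_left hn hC.le)))

section Planar

variable {b c a' b' c' a'' b'' c'' q : ℝ}

def sysCoord (b c : ℝ) (v : ℝ × ℝ) : ℝ := v.1 + b * v.2 + c

noncomputable def sysLift (b b' b'' w : ℝ) : ℝ × ℝ := (w, b' / b'' + (b * w)⁻¹)

lemma sysStep_denom_eq (hb : b ≠ 0) (h2 : a'' * b = b'') (h3 : b'' * c = b * c'')
    (v : ℝ × ℝ) : a'' * v.1 + b'' * v.2 + c'' = a'' * sysCoord b c v := by
  have hc'' : c'' = a'' * c := mul_left_cancel₀ hb (by linear_combination -h3 - c * h2)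
  rw [sysCoord, hc'', ← h2]
  ring

lemma sysStep_denom_ne_zero (hb : b ≠ 0) (hb'' : b'' ≠ 0) (h2 : a'' * b = b'')
    (h3 : b'' * c = b * c'') {v : ℝ × ℝ} (hv : sysCoord b c v ≠ 0) :
    a'' * v.1 + b'' * v.2 + c'' ≠ 0 := by
  rw [sysStep_denom_eq hb h2 h3]
  exact mul_ne_zero (by rintro rfl; exact hb'' (by linarith)) hv

lemma sysStep_eq (hb : b ≠ 0) (hb'' : b'' ≠ 0) (h1 : a' * b = b') (h2 : a'' * b = b'')
    (h3 : b'' * c = b * c'') (h4 : b'' = b * (b * c' - b' * c)) {v : ℝ × ℝ}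
    (hv : sysCoord b c v ≠ 0) :
    sysStep b c a' b' c' a'' b'' c'' v = sysLift b b' b'' (sysCoord b c v) := by
  have ha'' : a'' ≠ 0 := by
    rintro rfl
    exact hb'' (by linarith)
  have hc' : a'' = b * c' - a' * b * c :=
    mul_left_cancel₀ hb (by linear_combination h2 + h4 + b * c * h1)
  rw [sysStep, sysLift, sysStep_denom_eq hb h2 h3]
  unfold sysCoord at hv ⊢
  subst h1 h2
  congr 1
  field_simp
  linear_combination -hc'

lemma sysCoord_zero_div (hb : b ≠ 0) (w : ℝ) : sysCoord b c (0, (w - c) / b) = w := by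
  rw [sysCoord]
  field_simp
  ring

lemma sysCoord_sysLift (hb : b ≠ 0) (hq : q = c + b * b' / b'') {w : ℝ} (hw : w ≠ 0) :
    sysCoord b c (sysLift b b' b'' w) = reducedMap (-q) w := by
  rw [sysCoord, sysLift, reducedMap, hq]
  field_simp
  ring

lemma abs_sysLift_snd_le {m w : ℝ} (hm : 0 < m) (hw : m ≤ w) :
    |(sysLift b b' b'' w).2| ≤ |b' / b''| + (|b| * m)⁻¹ := by
  refine (abs_add_le _ _).trans (add_le_add_right ?_ _)
  rw [abs_inv, abs_mul, abs_of_pos (hm.trans_le hw)]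
  by_cases hb : b = 0
  · simp [hb]
  exact inv_anti₀ (by positivity) (by gcongr)

lemma abs_sub_le_sqrt_sysLift (w w' : ℝ) :
    |w - w'| ≤ √(((sysLift b b' b'' w).1 - (sysLift b b' b'' w').1) ^ 2 +
      ((sysLift b b' b'' w).2 - (sysLift b b' b'' w').2) ^ 2) :=
  Real.abs_le_sqrt (le_add_of_nonneg_right (sq_nonneg _))

lemma sqrt_sysLift_le {m w w' : ℝ} (hm : 0 < m) (hw : m ≤ w) (hw' : m ≤ w') :
    √(((sysLift b b' b'' w).1 - (sysLift b b' b'' w').1) ^ 2 +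
      ((sysLift b b' b'' w).2 - (sysLift b b' b'' w').2) ^ 2) ≤
      (1 + (|b| * m ^ 2)⁻¹) * |w - w'| := by
  have h0 : 0 < w := hm.trans_le hw
  have h0' : 0 < w' := hm.trans_le hw'
  have hsnd : |(sysLift b b' b'' w).2 - (sysLift b b' b'' w').2| ≤ (|b| * m ^ 2)⁻¹ * |w - w'| := by
    by_cases hb : b = 0
    · simp [sysLift, hb]
    have : (sysLift b b' b'' w).2 - (sysLift b b' b'' w').2 = (w' - w) / (b * w * w') := by
      simp only [sysLift]
      field_simp
      ring
    rw [this, abs_div, abs_sub_comm, abs_mul, abs_mul, abs_of_pos h0, abs_of_pos h0',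
      div_eq_inv_mul]
    refine mul_le_mul_of_nonneg_right (inv_anti₀ (by positivity) ?_) (abs_nonneg _)
    rw [mul_assoc, sq]
    gcongr
  rw [Real.sqrt_le_iff]
  refine ⟨by positivity, ?_⟩
  calc (w - w') ^ 2 + ((sysLift b b' b'' w).2 - (sysLift b b' b'' w').2) ^ 2
      = |w - w'| ^ 2 + |(sysLift b b' b'' w).2 - (sysLift b b' b'' w').2| ^ 2 := by
        rw [sq_abs, sq_abs]
    _ ≤ |w - w'| ^ 2 + ((|b| * m ^ 2)⁻¹ * |w - w'|) ^ 2 := by gcongr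
    _ ≤ ((1 + (|b| * m ^ 2)⁻¹) * |w - w'|) ^ 2 := by
        have : 0 ≤ (|b| * m ^ 2)⁻¹ := by positivity
        nlinarith [abs_nonneg (w - w'), mul_nonneg this (sq_nonneg |w - w'|)]

variable {F : ℝ × ℝ → ℝ × ℝ} {v : ℝ × ℝ} (hb : b ≠ 0) (hq : q = c + b * b' / b'')
  (hF : ∀ v, sysCoord b c v ≠ 0 → F v = sysLift b b' b'' (sysCoord b c v))
include hb hq hF

lemma sysCoord_iterate (hv : ∀ n, (reducedMap (-q))^[n] (sysCoord b c v) ≠ 0) (n : ℕ) :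
    sysCoord b c (F^[n] v) = (reducedMap (-q))^[n] (sysCoord b c v) := by
  induction n with
  | zero => rfl
  | succ n ih =>
    rw [iterate_succ_apply', iterate_succ_apply', hF _ (ih ▸ hv n), ih,
      sysCoord_sysLift hb hq (hv n)]

lemma iterate_succ_eq_sysLift (hv : ∀ n, (reducedMap (-q))^[n] (sysCoord b c v) ≠ 0) (n : ℕ) :
    F^[n + 1] v = sysLift b b' b'' ((reducedMap (-q))^[n] (sysCoord b c v)) := by
  have := sysCoord_iterate hb hq hF hv n
  rw [iterate_succ_apply', hF _ (this ▸ hv n), this]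

lemma exists_abs_iterate_le {m M : ℝ} (hm : 0 < m)
    (hv : ∀ n, (reducedMap (-q))^[n] (sysCoord b c v) ∈ Icc m M) :
    ∃ K, ∀ n, |(F^[n] v).1| ≤ K ∧ |(F^[n] v).2| ≤ K := by
  refine ⟨max (max |v.1| |v.2|) (max M (|b' / b''| + (|b| * m)⁻¹)), ?_⟩
  rintro (_ | n)
  · exact ⟨le_max_of_le_left (le_max_left _ _), le_max_of_le_left (le_max_right _ _)⟩
  have hw := hv n
  rw [iterate_succ_eq_sysLift hb hq hF (fun n => (hm.trans_le (hv n).1).ne')]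
  refine ⟨le_max_of_le_right (le_max_of_le_left ?_),
    le_max_of_le_right (le_max_of_le_right (abs_sysLift_snd_le hm hw.1))⟩
  exact (abs_of_pos (hm.trans_le hw.1)).trans_le hw.2

lemma limsup_pos_and_liminf_eq_zero_of_sysCoord {m M : ℝ} (hm : 0 < m) {u v : ℝ × ℝ}
    (hu : ∀ n, (reducedMap (-q))^[n] (sysCoord b c u) ∈ Icc m M)
    (hv : ∀ n, (reducedMap (-q))^[n] (sysCoord b c v) ∈ Icc m M)
    (hfar : ∃ δ > 0, ∃ᶠ n in atTop, δ ≤ dist ((reducedMap (-q))^[n] (sysCoord b c u))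
      ((reducedMap (-q))^[n] (sysCoord b c v)))
    (hnear : ∀ ε > 0, ∃ᶠ n in atTop, dist ((reducedMap (-q))^[n] (sysCoord b c u))
      ((reducedMap (-q))^[n] (sysCoord b c v)) ≤ ε) :
    0 < limsup (fun n => √(((F^[n] u).1 - (F^[n] v).1) ^ 2 + ((F^[n] u).2 - (F^[n] v).2) ^ 2))
        atTop ∧
      liminf (fun n => √(((F^[n] u).1 - (F^[n] v).1) ^ 2 + ((F^[n] u).2 - (F^[n] v).2) ^ 2))
        atTop = 0 := by
  have hu' := iterate_succ_eq_sysLift hb hq hF fun n => (hm.trans_le (hu n).1).ne'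
  have hv' := iterate_succ_eq_sysLift hb hq hF fun n => (hm.trans_le (hv n).1).ne'
  refine limsup_pos_and_liminf_eq_zero (C := 1 + (|b| * m ^ 2)⁻¹) (fun n => Real.sqrt_nonneg _)
    (fun n => ?_) (fun n => ?_) (fun n => Real.dist_le_of_mem_Icc (hu n) (hv n)) (by positivity)
    hfar hnear
  · rw [hu', hv', Real.dist_eq]
    exact abs_sub_le_sqrt_sysLift _ _
  · rw [hu', hv', Real.dist_eq]
    exact sqrt_sysLift_le hm (hu n).1 (hv n).1

end Planar

theorem stmt_13_general (b c a' b' c' a'' b'' c'' q : ℝ)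
    (hb : b ≠ 0) (hb'' : b'' ≠ 0)
    (h1 : a' * b = b') (h2 : a'' * b = b'') (h3 : b'' * c = b * c'')
    (h4 : b'' = b * (b * c' - b' * c))
    (hq : q = c + b * b' / b'') (hq2 : q < -Real.sqrt 3) :
    ∃ S : Set (ℝ × ℝ), ¬ S.Countable ∧
      (∀ p ∈ S, p.1 + b * p.2 + c > 0) ∧
      (∀ p ∈ S, ∀ n : ℕ,
        a'' * ((sysStep b c a' b' c' a'' b'' c'')^[n] p).1 +
          b'' * ((sysStep b c a' b' c' a'' b'' c'')^[n] p).2 + c'' ≠ 0) ∧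
      (∀ p ∈ S, ∃ M : ℝ, ∀ n : ℕ,
        |((sysStep b c a' b' c' a'' b'' c'')^[n] p).1| ≤ M ∧
        |((sysStep b c a' b' c' a'' b'' c'')^[n] p).2| ≤ M) ∧
      (∀ u ∈ S, ∀ v ∈ S, u ≠ v →
        0 < Filter.limsup
            (fun n : ℕ => Real.sqrt
              ((((sysStep b c a' b' c' a'' b'' c'')^[n] u).1 -
                  ((sysStep b c a' b' c' a'' b'' c'')^[n] v).1) ^ 2 +
               (((sysStep b c a' b' c' a'' b'' c'')^[n] u).2 -
                  ((sysStep b c a' b' c' a'' b'' c'')^[n] v).2) ^ 2))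
            Filter.atTop ∧
        Filter.liminf
            (fun n : ℕ => Real.sqrt
              ((((sysStep b c a' b' c' a'' b'' c'')^[n] u).1 -
                  ((sysStep b c a' b' c' a'' b'' c'')^[n] v).1) ^ 2 +
               (((sysStep b c a' b' c' a'' b'' c'')^[n] u).2 -
                  ((sysStep b c a' b' c' a'' b'' c'')^[n] v).2) ^ 2))
            Filter.atTop = 0) := by
  have hp : 433 / 250 < -q := by
    nlinarith [Real.sq_sqrt (show (0 : ℝ) ≤ 3 by norm_num), Real.sqrt_nonneg 3]
  obtain ⟨W, hWc, hWorb, hW⟩ := ReducedMap.exists_scrambled hp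
  have hm : 0 < ReducedMap.leftEnd (-q) := (ReducedMap.leftEnd_mem (by linarith)).1
  have hF := fun v => sysStep_eq (v := v) hb hb'' h1 h2 h3 h4
  set Φ : ℝ → ℝ × ℝ := fun w => (0, (w - c) / b)
  have horb : ∀ w ∈ W, ∀ n, (reducedMap (-q))^[n] (sysCoord b c (Φ w)) ∈
      Icc (ReducedMap.leftEnd (-q)) (-q) := fun w hw => by
    simpa only [Φ, sysCoord_zero_div hb] using hWorb w hw
  refine ⟨Φ '' W, fun hS => hWc ?_, ?_, ?_, ?_, ?_⟩
  · refine (hS.preimage fun w w' h => ?_).mono (subset_preimage_image Φ W)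
    rw [← sysCoord_zero_div hb w, ← sysCoord_zero_div hb w']
    exact congrArg (sysCoord b c) h
  · rintro _ ⟨w, hw, rfl⟩
    exact hm.trans_le (horb w hw 0).1
  · rintro _ ⟨w, hw, rfl⟩ n
    have hne := fun n => (hm.trans_le (horb w hw n).1).ne'
    refine sysStep_denom_ne_zero hb hb'' h2 h3 ?_
    rw [sysCoord_iterate hb hq hF hne]
    exact hne n
  · rintro _ ⟨w, hw, rfl⟩
    exact exists_abs_iterate_le hb hq hF hm (horb w hw)
  · rintro _ ⟨w, hw, rfl⟩ _ ⟨w', hw', rfl⟩ hww'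
    obtain ⟨hfar, hnear⟩ := hW w hw w' hw' fun h => hww' (h ▸ rfl)
    exact limsup_pos_and_liminf_eq_zero_of_sysCoord hb hq hF hm (horb w hw) (horb w' hw')
      (by simpa only [Φ, sysCoord_zero_div hb] using hfar)
      (by simpa only [Φ, sysCoord_zero_div hb] using hnear)

/-- Under hypotheses (H) with `−2 < q < −√3`, the system exhibits Li–Yorke
chaos: there is an uncountable set `S` of initial points with
`x₀ + b·y₀ + c > 0`, whose orbits are well-defined and bounded, and such that
any two distinct orbits from `S` have Euclidean distance with strictly
positive limsup and zero liminf. -/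
theorem stmt_13 (a b c a' b' c' a'' b'' c'' q : ℝ)
    (hb : b ≠ 0) (hb'' : b'' ≠ 0)
    (hnt1 : |a'| + |a''| > 0) (hnt2 : |a''| + |b''| > 0)
    (hnt3 : |a'| + |b'| + |c'| > 0)
    (ha : a = 1) (h1 : a' * b = b') (h2 : a'' * b = b'') (h3 : b'' * c = b * c'')
    (h4 : b'' = b * (b * c' - b' * c))
    (hq : q = c + b * b' / b'') (hq1 : -2 < q) (hq2 : q < -Real.sqrt 3) :
    ∃ S : Set (ℝ × ℝ), ¬ S.Countable ∧
      (∀ p ∈ S, p.1 + b * p.2 + c > 0) ∧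
      (∀ p ∈ S, ∀ n : ℕ,
        a'' * ((sysStep b c a' b' c' a'' b'' c'')^[n] p).1 +
          b'' * ((sysStep b c a' b' c' a'' b'' c'')^[n] p).2 + c'' ≠ 0) ∧
      (∀ p ∈ S, ∃ M : ℝ, ∀ n : ℕ,
        |((sysStep b c a' b' c' a'' b'' c'')^[n] p).1| ≤ M ∧
        |((sysStep b c a' b' c' a'' b'' c'')^[n] p).2| ≤ M) ∧
      (∀ u ∈ S, ∀ v ∈ S, u ≠ v →
        0 < Filter.limsup
            (fun n : ℕ => Real.sqrt
              ((((sysStep b c a' b' c' a'' b'' c'')^[n] u).1 -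
                  ((sysStep b c a' b' c' a'' b'' c'')^[n] v).1) ^ 2 +
               (((sysStep b c a' b' c' a'' b'' c'')^[n] u).2 -
                  ((sysStep b c a' b' c' a'' b'' c'')^[n] v).2) ^ 2))
            Filter.atTop ∧
        Filter.liminf
            (fun n : ℕ => Real.sqrt
              ((((sysStep b c a' b' c' a'' b'' c'')^[n] u).1 -
                  ((sysStep b c a' b' c' a'' b'' c'')^[n] v).1) ^ 2 +
               (((sysStep b c a' b' c' a'' b'' c'')^[n] u).2 -
                  ((sysStep b c a' b' c' a'' b'' c'')^[n] v).2) ^ 2))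
            Filter.atTop = 0) :=
  stmt_13_general b c a' b' c' a'' b'' c'' q hb hb'' h1 h2 h3 h4 hq hq2
end
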